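/- arXiv:2205.08187 — 6 statements merged into one kernel-verified Lean document; each statement's English description precedes it below -/
import Mathlib

section
/- Let ρ be a Lévy measure on (0,∞) (i.e., ∫ min(1,x) ρ(dx) < ∞) with tail intensity ρ̄(x) = ρ((x,∞)) satisfying ρ̄(x) ~ c x^{-τ} as x → ∞ for some c, τ > 0. Define ν̄(x) = ∫₀^∞ ρ̄(x/z) · Gamma(z; 1/2, 1/2) dz, where Gamma(·; 1/2, 1/2) is the density of the gamma distribution with shape 1/2 and rate 1/2 (the chi-squared with 1 degree of freedom). Then ν̄(x) ~ (2^τ Γ(τ+1/2)/√π) · c · x^{-τ} as x → ∞. -/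
open MeasureTheory Filter Topology

/-- A measure `ρ` on `(0,∞)` is a Lévy measure: it gives no mass to `(-∞,0]` and
integrates `min(1,x)`. -/
def IsLevyMeasure (ρ : Measure ℝ) : Prop :=
  ρ (Set.Iic 0) = 0 ∧ ∫⁻ x, ENNReal.ofReal (min 1 x) ∂ρ ≠ ⊤

/-!
Writing `g` for the `Gamma(1/2, 1/2)` density (`chiSqDensity`), we have
`x^τ ν̄(x) = ∫ x^τ ρ̄(x/z) g(z) dz`, and the integrand tends pointwise to `c z^τ g(z)`.
Dominated convergence applies: where `x/z ≥ Y` the tail asymptotics give `x^τ ρ̄(x/z) ≤ 2c z^τ`,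
and where `x/z < Y` the Lévy condition gives `ρ̄(y) ≤ A (1 + 1/y)`, hence
`x^τ ρ̄(x/z) ≤ A Y^τ z^τ (1 + z)`; both bounds are integrable against `g`. The limit
`c ∫ z^τ g(z) dz` is a Gamma integral, equal to `c 2^τ Γ(τ + 1/2) / √π`.
-/

open Set Real

noncomputable def chiSqDensity (z : ℝ) : ℝ :=
  1 / √(2 * π) * z ^ (-(1 : ℝ) / 2) * exp (-z / 2)

lemma measurable_chiSqDensity : Measurable chiSqDensity := by
  unfold chiSqDensity
  fun_prop

lemma chiSqDensity_nonneg {z : ℝ} (hz : 0 ≤ z) : 0 ≤ chiSqDensity z := by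
  have := rpow_nonneg hz (-(1 : ℝ) / 2)
  unfold chiSqDensity
  positivity

lemma rpow_mul_chiSqDensity {z : ℝ} (hz : 0 < z) (s : ℝ) :
    z ^ s * chiSqDensity z = (√(2 * π))⁻¹ * (z ^ (s + 1 / 2 - 1) * exp (-(1 / 2 * z))) := by
  rw [chiSqDensity, show s + 1 / 2 - 1 = s + -(1 : ℝ) / 2 by ring, rpow_add hz]
  ring_nf

lemma integrableOn_rpow_mul_exp_neg_mul {a b : ℝ} (ha : 0 < a) (hb : 0 < b) :
    IntegrableOn (fun t : ℝ => t ^ (a - 1) * exp (-(b * t))) (Ioi 0) :=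
  Integrable.of_integral_ne_zero <| by
    rw [integral_rpow_mul_exp_neg_mul_Ioi ha hb]
    exact mul_ne_zero (by positivity) (Gamma_pos_of_pos ha).ne'

lemma integrableOn_rpow_mul_one_add_mul_chiSqDensity {τ : ℝ} (hτ : -1 / 2 < τ) :
    IntegrableOn (fun z => z ^ τ * (1 + z) * chiSqDensity z) (Ioi 0) := by
  have h₁ := integrableOn_rpow_mul_exp_neg_mul (a := τ + 1 / 2) (b := 1 / 2) (by linarith)
    (by norm_num)
  have h₂ := integrableOn_rpow_mul_exp_neg_mul (a := τ + 1 + 1 / 2) (b := 1 / 2) (by linarith)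
    (by norm_num)
  refine IntegrableOn.congr_fun ((h₁.add h₂).const_mul (√(2 * π))⁻¹) 
    (fun z (hz : 0 < z) => ?_) measurableSet_Ioi
  rw [mul_add, mul_one, add_mul, ← rpow_add_one hz.ne', rpow_mul_chiSqDensity hz,
    rpow_mul_chiSqDensity hz, Pi.add_apply, mul_add]

lemma integral_rpow_mul_chiSqDensity {τ : ℝ} (hτ : -1 / 2 < τ) :
    ∫ z in Ioi 0, z ^ τ * chiSqDensity z = 2 ^ τ * Gamma (τ + 1 / 2) / √π := by
  rw [setIntegral_congr_fun measurableSet_Ioi (fun z hz => rpow_mul_chiSqDensity hz τ),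
    integral_const_mul, integral_rpow_mul_exp_neg_mul_Ioi (by linarith) (by norm_num),
    sqrt_mul zero_le_two, one_div_one_div, rpow_add zero_lt_two, ← sqrt_eq_rpow]
  have : √2 ≠ 0 := by positivity
  have : √π ≠ 0 := by positivity
  field_simp

lemma IsLevyMeasure.exists_tail_le {ρ : Measure ℝ} (hρ : IsLevyMeasure ρ) :
    ∃ A, 0 ≤ A ∧ ∀ y, 0 < y → (ρ (Ioi y)).toReal ≤ A * (1 + y⁻¹) := by
  refine ⟨(∫⁻ x, ENNReal.ofReal (min 1 x) ∂ρ).toReal, ENNReal.toReal_nonneg, fun y hy => ?_⟩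
  have hmarkov : ENNReal.ofReal (min 1 y) * ρ (Ioi y) ≤ ∫⁻ x, ENNReal.ofReal (min 1 x) ∂ρ :=
    (mul_le_mul_right (measure_mono fun x (hx : y < x) =>
      ENNReal.ofReal_le_ofReal (min_le_min le_rfl hx.le)) _).trans
      (mul_meas_ge_le_lintegral₀ (by fun_prop) _)
  have hmarkov' := ENNReal.toReal_mono hρ.2 hmarkov
  rw [ENNReal.toReal_mul, ENNReal.toReal_ofReal (le_min zero_le_one hy.le)] at hmarkov'
  have hmin : 1 ≤ (1 + y⁻¹) * min 1 y := by
    rcases le_total 1 y with h | h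
    · rw [min_eq_left h]; have := inv_nonneg.mpr hy.le; linarith
    · rw [min_eq_right h, add_mul, inv_mul_cancel₀ hy.ne']; linarith
  calc (ρ (Ioi y)).toReal ≤ (ρ (Ioi y)).toReal * ((1 + y⁻¹) * min 1 y) :=
        le_mul_of_one_le_right ENNReal.toReal_nonneg hmin
    _ = (1 + y⁻¹) * (min 1 y * (ρ (Ioi y)).toReal) := by ring
    _ ≤ _ := by rw [mul_comm _ (1 + y⁻¹)]; gcongr

lemma measurable_measure_Ioi_toReal (ρ : Measure ℝ) : Measurable fun y => (ρ (Ioi y)).toReal :=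
  ENNReal.measurable_toReal.comp
    (Antitone.measurable fun _ _ h => measure_mono (Ioi_subset_Ioi h))

lemma eventually_le_two_mul_of_tendsto_div {α : Type*} {l : Filter α} {f g : α → ℝ}
    (h : Tendsto (fun y => f y / g y) l (𝓝 1)) (hg : ∀ᶠ y in l, 0 < g y) :
    ∀ᶠ y in l, f y ≤ 2 * g y := by
  filter_upwards [h.eventually (eventually_le_nhds one_lt_two), hg] with y hy hgy
  rw [div_le_iff₀ hgy] at hy
  linarith

lemma tendsto_rpow_mul_comp_div {r : ℝ → ℝ} {c τ z : ℝ} (hc : c ≠ 0) (hz : 0 < z)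
    (hr : Tendsto (fun y => r y / (c * y ^ (-τ))) atTop (𝓝 1)) :
    Tendsto (fun x => x ^ τ * r (x / z)) atTop (𝓝 (c * z ^ τ)) := by
  have h := (hr.comp (tendsto_id.atTop_div_const hz)).mul_const (c * z ^ τ)
  rw [one_mul] at h
  refine h.congr' ?_
  filter_upwards [eventually_gt_atTop 0] with x hx
  have : x ^ τ ≠ 0 := (rpow_pos_of_pos hx τ).ne'
  have : z ^ τ ≠ 0 := (rpow_pos_of_pos hz τ).ne'
  simp only [Function.comp_apply, id, rpow_neg (div_pos hx hz).le, div_rpow hx.le hz.le]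
  field_simp

lemma rpow_mul_comp_div_le {r : ℝ → ℝ} {A C τ Y x z : ℝ} (hτ : 0 ≤ τ) (hA : 0 ≤ A) (hC : 0 ≤ C)
    (hr_nonneg : ∀ y, 0 ≤ r y) (hr_zero : ∀ y, 0 < y → r y ≤ A * (1 + y⁻¹))
    (hr_atTop : ∀ y ≥ Y, r y ≤ C * y ^ (-τ)) (hY : 1 ≤ Y) (hx : Y ≤ x) (hz : 0 < z) :
    x ^ τ * r (x / z) ≤ (C + A * Y ^ τ) * (z ^ τ * (1 + z)) := by
  have hx0 : 0 < x := by linarith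
  have hzτ : 0 ≤ z ^ τ := rpow_nonneg hz.le τ
  rcases le_or_gt Y (x / z) with hlarge | hsmall
  · calc x ^ τ * r (x / z) ≤ x ^ τ * (C * (x / z) ^ (-τ)) := by
          gcongr; exact hr_atTop _ hlarge
      _ = C * z ^ τ := by
          have : x ^ τ ≠ 0 := (rpow_pos_of_pos hx0 τ).ne'
          have : z ^ τ ≠ 0 := (rpow_pos_of_pos hz τ).ne'
          rw [rpow_neg (div_pos hx0 hz).le, div_rpow hx0.le hz.le]
          field_simp
      _ ≤ (C + A * Y ^ τ) * (z ^ τ * (1 + z)) := by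
          have : 0 ≤ A * Y ^ τ := by positivity
          nlinarith [mul_nonneg hzτ hz.le]
  · have hxτ : x ^ τ ≤ Y ^ τ * z ^ τ := by
      rw [← mul_rpow (by linarith) hz.le]
      exact rpow_le_rpow hx0.le ((div_lt_iff₀ hz).mp hsmall).le hτ
    have hr : r (x / z) ≤ A * (1 + z) := by
      refine (hr_zero _ (div_pos hx0 hz)).trans ?_
      rw [inv_div]
      gcongr
      exact div_le_self hz.le (by linarith)
    calc x ^ τ * r (x / z) ≤ (Y ^ τ * z ^ τ) * (A * (1 + z)) := by
          gcongr
          exact hr_nonneg _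
      _ = A * Y ^ τ * (z ^ τ * (1 + z)) := by ring
      _ ≤ (C + A * Y ^ τ) * (z ^ τ * (1 + z)) := by
          gcongr
          linarith

theorem tendsto_rpow_mul_integral_comp_div_mul {r g : ℝ → ℝ} {A c τ : ℝ} (hc : 0 < c)
    (hτ : 0 ≤ τ) (hA : 0 ≤ A) (hr_meas : Measurable r) (hr_nonneg : ∀ y, 0 ≤ r y)
    (hr_zero : ∀ y, 0 < y → r y ≤ A * (1 + y⁻¹))
    (hr_atTop : Tendsto (fun y => r y / (c * y ^ (-τ))) atTop (𝓝 1))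
    (hg_meas : Measurable g) (hg_nonneg : ∀ z, 0 ≤ z → 0 ≤ g z)
    (hg_int : IntegrableOn (fun z => z ^ τ * (1 + z) * g z) (Ioi 0)) :
    Tendsto (fun x => x ^ τ * ∫ z in Ioi 0, r (x / z) * g z) atTop
      (𝓝 (c * ∫ z in Ioi 0, z ^ τ * g z)) := by
  obtain ⟨Y, hY⟩ : ∃ Y, ∀ y ≥ Y, 1 ≤ y ∧ r y ≤ 2 * c * y ^ (-τ) := by
    refine eventually_atTop.mp ((eventually_ge_atTop 1).and ?_)
    simpa only [mul_assoc] using eventually_le_two_mul_of_tendsto_div hr_atTop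
      ((eventually_gt_atTop 0).mono fun y hy => mul_pos hc (rpow_pos_of_pos hy _))
  have hY1 : 1 ≤ Y := (hY Y le_rfl).1
  have hlim := tendsto_integral_filter_of_dominated_convergence (l := atTop)
    (μ := volume.restrict (Ioi 0)) (F := fun x z => x ^ τ * r (x / z) * g z)
    (f := fun z => c * z ^ τ * g z)
    (fun z => (2 * c + A * Y ^ τ) * (z ^ τ * (1 + z) * g z))
    (.of_forall fun x => by fun_prop) ?bound (hg_int.const_mul _) ?pointwise
  · simpa only [mul_assoc, integral_const_mul] using hlim
  case bound =>
    filter_upwards [eventually_ge_atTop Y] with x hx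
    rw [ae_restrict_iff' measurableSet_Ioi]
    refine .of_forall fun z (hz : 0 < z) => ?_
    have hdom := rpow_mul_comp_div_le hτ hA (by positivity) hr_nonneg hr_zero
      (fun y hy => (hY y hy).2) hY1 hx hz
    rw [norm_of_nonneg (mul_nonneg (mul_nonneg (rpow_nonneg (by linarith) _) (hr_nonneg _))
      (hg_nonneg _ hz.le)), ← mul_assoc]
    exact mul_le_mul_of_nonneg_right hdom (hg_nonneg _ hz.le)
  case pointwise =>
    rw [ae_restrict_iff' measurableSet_Ioi]
    exact .of_forall fun z hz => (tendsto_rpow_mul_comp_div hc.ne' hz hr_atTop).mul_const (g z)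

/-- If the tail Lévy intensity `ρ̄(x) = ρ((x,∞))` satisfies `ρ̄(x) ~ c x^{-τ}` as `x → ∞`,
then the mixed tail `ν̄(x) = ∫₀^∞ ρ̄(x/z) Gamma(z;1/2,1/2) dz` satisfies
`ν̄(x) ~ (2^τ Γ(τ+1/2)/√π) c x^{-τ}` as `x → ∞`. -/
theorem stmt_6 (ρ : Measure ℝ) (hρ : IsLevyMeasure ρ) (c τ : ℝ) (hc : 0 < c) (hτ : 0 < τ)
    (htail : Tendsto (fun x : ℝ => (ρ (Set.Ioi x)).toReal / (c * x ^ (-τ)))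
      atTop (𝓝 1)) :
    Tendsto (fun x : ℝ =>
        (∫ z in Set.Ioi (0 : ℝ), (ρ (Set.Ioi (x / z))).toReal *
            ((1 / Real.sqrt (2 * Real.pi)) * z ^ (-(1 : ℝ) / 2) * Real.exp (-z / 2))) /
          ((2 : ℝ) ^ τ * Real.Gamma (τ + 1 / 2) / Real.sqrt Real.pi * c * x ^ (-τ)))
      atTop (𝓝 1) := by
  obtain ⟨A, hA, hρA⟩ := hρ.exists_tail_le
  have hlim := tendsto_rpow_mul_integral_comp_div_mul hc hτ.le hA
    (measurable_measure_Ioi_toReal ρ) (fun _ => ENNReal.toReal_nonneg) hρA htail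
    measurable_chiSqDensity (fun _ => chiSqDensity_nonneg)
    (integrableOn_rpow_mul_one_add_mul_chiSqDensity (by linarith))
  rw [integral_rpow_mul_chiSqDensity (by linarith), mul_comm c] at hlim
  set D := 2 ^ τ * Gamma (τ + 1 / 2) / √π * c
  have hD : D ≠ 0 := by
    have := Gamma_pos_of_pos (by linarith : 0 < τ + 1 / 2)
    positivity
  have hratio := hlim.div_const D
  rw [div_self hD] at hratio
  unfold chiSqDensity at hratio
  refine hratio.congr' ?_
  filter_upwards [eventually_gt_atTop 0] with x hx
  have : x ^ τ ≠ 0 := (rpow_pos_of_pos hx τ).ne'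
  rw [rpow_neg hx.le]
  field_simp
end

section
/- Let (X_{p,j}) be a triangular array of nonnegative random variables, iid within each row, such that Σ_{j=1}^p X_{p,j} converges in distribution to ID(a, ρ). Then for every κ ∈ (0,1), the ⌊κp⌋-th largest order statistic X_{p,(⌊κp⌋)} converges in probability to 0 as p → ∞. -/
open MeasureTheory ProbabilityTheory Filter Topology

noncomputable section

def IsID (μ : Measure ℝ) (a : ℝ) (ρ : Measure ℝ) : Prop :=
  ∀ t : ℝ, 0 ≤ t →
    ∫ x, Real.exp (-(t * x)) ∂μ =
      Real.exp (-(t * a) - ∫ w, (1 - Real.exp (-(t * w))) ∂ρ)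

def TendstoInDist {Ω : Type*} [MeasurableSpace Ω] (P : Measure Ω)
    (S : ℕ → Ω → ℝ) (μ : Measure ℝ) : Prop :=
  ∀ f : BoundedContinuousFunction ℝ ℝ,
    Tendsto (fun p => ∫ ω, f (S p ω) ∂P) atTop (𝓝 (∫ x, f x ∂μ))

def orderStatDesc (l : List ℝ) (k : ℕ) : ℝ :=
  (l.insertionSort (· ≥ ·)).getD (k - 1) 0

/-! If `ε` is below the `k`-th largest entry of a nonnegative row, the row sum is at least
`k ε`. Since the row sums converge in distribution they are tight, while `⌊κ p⌋ ε → ∞`; hence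
`P(X_{p,(⌊κp⌋)} ≥ ε) ≤ P(S_p ≥ ⌊κ p⌋ ε) → 0`. -/

lemma orderStatDesc_nonneg {l : List ℝ} (hl : ∀ x ∈ l, 0 ≤ x) (k : ℕ) :
    0 ≤ orderStatDesc l k := by
  rw [orderStatDesc]
  rcases lt_or_ge (k - 1) (l.insertionSort (· ≥ ·)).length with hlt | hge
  · rw [List.getD_eq_getElem _ _ hlt]
    exact hl _ ((l.perm_insertionSort (· ≥ ·)).mem_iff.mp (List.getElem_mem _))
  · rw [List.getD_eq_default _ _ hge]

lemma mul_le_sum_of_le_orderStatDesc {l : List ℝ} (hl : ∀ x ∈ l, 0 ≤ x) {k : ℕ} {ε : ℝ}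
    (h : ε ≤ orderStatDesc l k) : k * ε ≤ l.sum := by
  rcases le_or_gt ε 0 with hε | hε
  · exact (mul_nonpos_of_nonneg_of_nonpos k.cast_nonneg hε).trans (List.sum_nonneg hl)
  set s := l.insertionSort (· ≥ ·) with hs
  have hperm : s.Perm l := l.perm_insertionSort _
  have hlt : k - 1 < s.length := by
    by_contra! hge
    rw [orderStatDesc, ← hs, List.getD_eq_default _ _ hge] at h
    linarith
  rw [orderStatDesc, ← hs, List.getD_eq_getElem _ _ hlt] at h
  have htake : ∀ x ∈ s.take k, ε ≤ x := by
    intro x hx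
    obtain ⟨i, hi, rfl⟩ := List.mem_take_iff_getElem.mp hx
    rw [lt_min_iff] at hi
    exact h.trans <| (l.pairwise_insertionSort _).rel_get_of_le
      (a := ⟨i, hi.2⟩) (b := ⟨k - 1, hlt⟩) (by simp only [Fin.mk_le_mk]; omega)
  have hlen : (s.take k).length = k := by rw [List.length_take]; omega
  calc (k : ℝ) * ε = (s.take k).length • ε := by rw [hlen, nsmul_eq_mul]
    _ ≤ (s.take k).sum := List.card_nsmul_le_sum _ _ htake
    _ ≤ (s.take k).sum + (s.drop k).sum :=
      le_add_of_nonneg_right (List.sum_nonneg fun x hx ↦ hl x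
        (hperm.mem_iff.mp (List.mem_of_mem_drop hx)))
    _ = l.sum := by rw [List.sum_take_add_sum_drop, hperm.sum_eq]

lemma tendsto_measure_Ici_atTop (μ : Measure ℝ) [IsFiniteMeasure μ] :
    Tendsto (fun x ↦ μ (Set.Ici x)) atTop (𝓝 0) := by
  have hempty : ⋂ x : ℝ, Set.Ici x = ∅ :=
    Set.eq_empty_of_forall_notMem fun x hx ↦
      (lt_add_one x).not_ge (Set.mem_iInter.mp hx (x + 1))
  simpa [hempty, Function.comp_def] using tendsto_measure_iInter_atTop (μ := μ)
    (fun _ ↦ measurableSet_Ici.nullMeasurableSet) (fun _ _ ↦ Set.Ici_subset_Ici.mpr)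
    ⟨0, measure_ne_top μ _⟩

namespace TendstoInDist

variable {Ω : Type*} [MeasurableSpace Ω] {P : Measure Ω} [IsProbabilityMeasure P]
  {S : ℕ → Ω → ℝ} {μ : Measure ℝ} [IsProbabilityMeasure μ]

lemma tendsto_probabilityMeasure_map (h : TendstoInDist P S μ) (hS : ∀ p, AEMeasurable (S p) P) :
    Tendsto (β := ProbabilityMeasure ℝ)
      (fun p ↦ ⟨P.map (S p), Measure.isProbabilityMeasure_map (hS p)⟩) atTop (𝓝 ⟨μ, ‹_›⟩) := by
  refine ProbabilityMeasure.tendsto_iff_forall_integral_tendsto.mpr fun f ↦ ?_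
  simpa only [ProbabilityMeasure.coe_mk,
    integral_map (hS _) f.continuous.measurable.aestronglyMeasurable] using h f

lemma tendsto_measure_le_of_tendsto_atTop (h : TendstoInDist P S μ)
    (hS : ∀ p, AEMeasurable (S p) P) {c : ℕ → ℝ} (hc : Tendsto c atTop atTop) :
    Tendsto (fun p ↦ P {ω | c p ≤ S p ω}) atTop (𝓝 0) := by
  rw [ENNReal.tendsto_nhds_zero]
  intro δ hδ
  obtain ⟨M, hM⟩ := ((tendsto_measure_Ici_atTop μ).eventually_lt_const hδ).exists
  have hlimsup := ProbabilityMeasure.limsup_measure_closed_le_of_tendsto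
    (h.tendsto_probabilityMeasure_map hS) (isClosed_Ici (a := M))
  filter_upwards [eventually_lt_of_limsup_lt (hlimsup.trans_lt hM),
    hc.eventually_ge_atTop M] with p hp hcp
  calc P {ω | c p ≤ S p ω} ≤ P (S p ⁻¹' Set.Ici M) := measure_mono fun ω hω ↦ hcp.trans hω
    _ = P.map (S p) (Set.Ici M) :=
      (Measure.map_apply_of_aemeasurable (hS p) measurableSet_Ici).symm
    _ ≤ δ := hp.le

end TendstoInDist

theorem stmt_13_general {Ω : Type*} [MeasurableSpace Ω] (P : Measure Ω) [IsProbabilityMeasure P]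
    (X : ℕ → ℕ → Ω → ℝ)
    (hmeas : ∀ p j, Measurable (X p j))
    (hnonneg : ∀ p j ω, 0 ≤ X p j ω)
    (μlim : Measure ℝ) (hprob : IsProbabilityMeasure μlim)
    (hconv : TendstoInDist P (fun p ω => ∑ j ∈ Finset.range p, X p j ω) μlim) :
    ∀ κ : ℝ, κ ∈ Set.Ioo (0 : ℝ) 1 →
      TendstoInMeasure P
        (fun p ω => orderStatDesc ((List.range p).map fun j => X p j ω) ⌊κ * p⌋₊)
        atTop (fun _ => 0) := by
  intro κ hκ
  rw [tendstoInMeasure_iff_dist]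
  intro ε hε
  have hrank : Tendsto (fun p : ℕ ↦ (⌊κ * p⌋₊ : ℝ) * ε) atTop atTop :=
    (tendsto_natCast_atTop_atTop.comp <| tendsto_nat_floor_atTop.comp <|
      tendsto_natCast_atTop_atTop.const_mul_atTop hκ.1).atTop_mul_const hε
  have hsum := hconv.tendsto_measure_le_of_tendsto_atTop
    (fun p ↦ (Finset.measurable_sum _ fun j _ ↦ hmeas p j).aemeasurable) hrank
  refine tendsto_of_tendsto_of_tendsto_of_le_of_le tendsto_const_nhds hsum (fun _ ↦ bot_le)
    fun p ↦ measure_mono fun ω hω ↦ ?_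
  have hrow : ∀ x ∈ (List.range p).map fun j => X p j ω, 0 ≤ x := by
    simp only [List.mem_map]
    rintro _ ⟨j, -, rfl⟩
    exact hnonneg p j ω
  rw [Set.mem_ofPred_eq, Real.dist_eq, sub_zero,
    abs_of_nonneg (orderStatDesc_nonneg hrow _)] at hω
  -- the row sum `∑ j ∈ range p, X p j ω` is definitionally the sum of the list
  exact mul_le_sum_of_le_orderStatDesc hrow hω

/-- If the row sums of a nonnegative triangular array converge in distribution to
`ID(a,ρ)`, then for every `κ ∈ (0,1)` the `⌊κp⌋`-th largest order statistic of row `p`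
converges in probability to `0`. -/
theorem stmt_13 {Ω : Type*} [MeasurableSpace Ω] (P : Measure Ω) [IsProbabilityMeasure P]
    (X : ℕ → ℕ → Ω → ℝ)
    (hmeas : ∀ p j, Measurable (X p j))
    (hnonneg : ∀ p j ω, 0 ≤ X p j ω)
    (hindep : ∀ p, iIndepFun (X p) P)
    (hident : ∀ p i j, IdentDistrib (X p i) (X p j) P P)
    (a : ℝ) (ha : 0 ≤ a) (ρ : Measure ℝ) (hρ : IsLevyMeasure ρ)
    (μlim : Measure ℝ) (hprob : IsProbabilityMeasure μlim) (hID : IsID μlim a ρ)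
    (hconv : TendstoInDist P (fun p ω => ∑ j ∈ Finset.range p, X p j ω) μlim) :
    ∀ κ : ℝ, κ ∈ Set.Ioo (0 : ℝ) 1 →
      TendstoInMeasure P
        (fun p ω => orderStatDesc ((List.range p).map fun j => X p j ω) ⌊κ * p⌋₊)
        atTop (fun _ => 0) :=
  stmt_13_general P X hmeas hnonneg μlim hprob hconv
end
end

section
/- Let (X_{p,j}) be a triangular array of nonnegative random variables, iid within each row, such that Σ_{j=1}^p X_{p,j} converges in distribution to ID(0, ρ) (drift zero). Then for every κ ∈ (0,1), the sum of all values at or below the ⌊κp⌋-th largest order statistic, Σ_{j=1}^p X_{p,j}·1{X_{p,j} ≤ X_{p,(⌊κp⌋)}}, converges in probability to 0 as p → ∞. -/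
/-!
Let `φ_p(t) = E e^{-t X_{p,1}}` and `ψ(t) = ∫ (1 - e^{-tw}) dρ(w)`. Independence turns the
convergence of the row sums into `φ_p(t)^p → e^{-ψ(t)}`, so `p (1 - φ_p(t)) ≤ ψ(t) + 1` for large
`p`. As the drift is zero, `ψ` is the whole Laplace exponent, and `ψ(t)/t → 0` by dominated
convergence with the bound `min 1 w`.

Fix `t`. Since `x 1{x ≤ 1/t} ≤ (3/t)(1 - e^{-tx})` and `1{x > 1/t} ≤ (1 - e^{-1})⁻¹ (1 - e^{-tx})`,
Markov's inequality bounds the probability that the entries `≤ 1/t` sum to at least `ε` by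
`3 (ψ(t) + 1) / (t ε)`, and the probability that at least `⌊κp⌋` entries exceed `1/t` by
`O((ψ(t) + 1) / ⌊κp⌋)`. Off these two events the `⌊κp⌋`-th largest entry is at most `1/t`, so the
entries below it sum to less than `ε`. Letting `p → ∞` and then `t → ∞` gives the claim.
-/

open MeasureTheory ProbabilityTheory Filter Topology

noncomputable section

open Finset
open scoped ENNReal

lemma le_countP_of_lt_orderStatDesc {l : List ℝ} {δ : ℝ} {k : ℕ} (hk : 1 ≤ k)
    (hkl : k ≤ l.length) (h : δ < orderStatDesc l k) :
    k ≤ l.countP (fun x => δ < x) := by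
  set s := l.insertionSort (· ≥ ·)
  have hperm : s.Perm l := l.perm_insertionSort _
  have hk' : k - 1 < s.length := by rw [hperm.length_eq]; omega
  have hs : δ < s[k - 1] := by
    rwa [orderStatDesc, List.getD_eq_getElem _ _ hk'] at h
  have htake : ∀ x ∈ s.take k, δ < x := by
    intro x hx
    obtain ⟨i, hi, rfl⟩ := List.getElem_of_mem hx
    rw [List.length_take] at hi
    have hi' : i < s.length := by omega
    have hle : s[k - 1] ≤ s[i] :=
      (List.pairwise_insertionSort _ l).rel_get_of_le (a := ⟨i, hi'⟩) (b := ⟨k - 1, hk'⟩)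
        (Fin.mk_le_mk.2 (by omega))
    simpa using hs.trans_le hle
  calc k = (s.take k).length := by rw [List.length_take]; omega
    _ = (s.take k).countP (fun x => δ < x) := (List.countP_eq_length.2 (by simpa using htake)).symm
    _ ≤ s.countP (fun x => δ < x) := (s.take_sublist k).countP_le
    _ = l.countP (fun x => δ < x) := hperm.countP_eq _

lemma countP_map_range_eq_card_filter {α : Type*} (x : ℕ → α) (q : α → Prop) [DecidablePred q]
    (p : ℕ) :
    ((List.range p).map x).countP (fun y => q y) = #{j ∈ range p | q (x j)} := by
  rw [List.countP_map, List.countP_eq_length_filter]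
  rfl

def sumBelowOrderStat (x : ℕ → ℝ) (p k : ℕ) : ℝ :=
  ∑ j ∈ range p, if x j ≤ orderStatDesc ((List.range p).map x) k then x j else 0

lemma sumBelowOrderStat_le_of_card_lt {x : ℕ → ℝ} (hx : ∀ j, 0 ≤ x j) {p k : ℕ} {δ : ℝ}
    (hk : 1 ≤ k) (hkp : k ≤ p) (hcard : #{j ∈ range p | δ < x j} < k) :
    sumBelowOrderStat x p k ≤ ∑ j ∈ range p, if x j ≤ δ then x j else 0 := by
  have hδ : orderStatDesc ((List.range p).map x) k ≤ δ := by
    by_contra! h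
    have := le_countP_of_lt_orderStatDesc hk (by simpa using hkp) h
    rw [countP_map_range_eq_card_filter] at this
    omega
  refine sum_le_sum fun j _ => ?_
  split_ifs with h₁ h₂ <;> first | exact le_rfl | exact hx j | exact absurd (h₁.trans hδ) h₂

lemma sumBelowOrderStat_nonneg {x : ℕ → ℝ} (hx : ∀ j, 0 ≤ x j) (p k : ℕ) :
    0 ≤ sumBelowOrderStat x p k :=
  sum_nonneg fun j _ => by split_ifs; exacts [hx j, le_rfl]

lemma div_three_le_one_sub_exp_neg {u : ℝ} (h0 : 0 ≤ u) (h1 : u ≤ 1) :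
    u / 3 ≤ 1 - Real.exp (-u) := by
  have hexp : Real.exp u ≤ 3 :=
    (Real.exp_le_exp.2 h1).trans (by linarith [Real.exp_one_lt_d9])
  have hinv : Real.exp (-u) * Real.exp u = 1 := by rw [← Real.exp_add]; simp
  nlinarith [Real.add_one_le_exp u, Real.exp_pos (-u), mul_nonneg h0 (sub_nonneg.2 hexp)]

lemma exp_neg_mul_le_one {t x : ℝ} (ht : 0 ≤ t) (hx : 0 ≤ x) : Real.exp (-(t * x)) ≤ 1 :=
  Real.exp_le_one_iff.2 (neg_nonpos.2 (mul_nonneg ht hx))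

lemma ite_le_inv_le_one_sub_exp {t x : ℝ} (ht : 0 < t) (hx : 0 ≤ x) :
    (if x ≤ t⁻¹ then x else 0) ≤ 3 / t * (1 - Real.exp (-(t * x))) := by
  split_ifs with h
  · have htx : t * x ≤ 1 :=
      (mul_le_mul_of_nonneg_left h ht.le).trans_eq (mul_inv_cancel₀ ht.ne')
    calc x = 3 / t * (t * x / 3) := by field_simp
      _ ≤ 3 / t * (1 - Real.exp (-(t * x))) :=
        mul_le_mul_of_nonneg_left (div_three_le_one_sub_exp_neg (by positivity) htx) (by positivity)
  · exact mul_nonneg (by positivity) (sub_nonneg.2 (exp_neg_mul_le_one ht.le hx))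

lemma indicator_Ioi_inv_le_one_sub_exp {t x : ℝ} (ht : 0 < t) :
    (Set.Ioi t⁻¹).indicator (fun _ => (1 : ℝ≥0∞)) x
      ≤ ENNReal.ofReal ((1 - Real.exp (-1))⁻¹ * (1 - Real.exp (-(t * x)))) := by
  by_cases h : t⁻¹ < x
  · have hc : 0 < 1 - Real.exp (-1) := sub_pos.2 (Real.exp_lt_one_iff.2 (by norm_num))
    have hle : Real.exp (-(t * x)) ≤ Real.exp (-1) := by
      rw [Real.exp_le_exp, neg_le_neg_iff]
      exact (mul_inv_cancel₀ ht.ne').symm.le.trans (mul_le_mul_of_nonneg_left h.le ht.le)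
    rw [Set.indicator_of_mem (Set.mem_Ioi.2 h), ENNReal.one_le_ofReal, ← div_eq_inv_mul,
      one_le_div hc]
    linarith
  · simp [Set.indicator_of_notMem (Set.notMem_Ioi.2 (not_lt.1 h))]

lemma one_sub_exp_neg_mul_div_le {t : ℝ} (ht : 0 < t) (w : ℝ) :
    (1 - Real.exp (-(t * w))) / t ≤ min t⁻¹ w := by
  rw [div_eq_mul_inv, le_min_iff]
  constructor
  · nlinarith [Real.exp_pos (-(t * w)), inv_pos.2 ht]
  · have := Real.one_sub_le_exp_neg (t * w)
    rw [mul_inv_le_iff₀ ht]; linarith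

section Row

variable {Ω : Type*} [MeasurableSpace Ω] {P : Measure Ω}

lemma lintegral_sum_comp_eq_card_mul {ι α : Type*} [MeasurableSpace α] {X : ι → Ω → α}
    {s : Finset ι} {i : ι} (hident : ∀ j ∈ s, IdentDistrib (X j) (X i) P P)
    {f : α → ℝ≥0∞} (hf : Measurable f) :
    ∫⁻ ω, ∑ j ∈ s, f (X j ω) ∂P = #s * ∫⁻ ω, f (X i ω) ∂P := by
  rw [lintegral_finsetSum' (f := fun j ω => f (X j ω)) _
    fun j hj => hf.comp_aemeasurable (hident j hj).aemeasurable_fst, ← nsmul_eq_mul, ← sum_const]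
  exact sum_congr rfl fun j hj => ((hident j hj).comp hf).lintegral_eq

lemma lintegral_ofReal_mul_one_sub_exp [IsProbabilityMeasure P] {Y : Ω → ℝ}
    (hY : Measurable Y) (hY0 : ∀ ω, 0 ≤ Y ω) {C t : ℝ} (hC : 0 ≤ C) (ht : 0 ≤ t) :
    ∫⁻ ω, ENNReal.ofReal (C * (1 - Real.exp (-(t * Y ω)))) ∂P
      = ENNReal.ofReal (C * (1 - mgf Y P (-t))) := by
  have hexp : Integrable (fun ω => Real.exp (-(t * Y ω))) P :=
    (integrable_const 1).mono' (hY.const_mul t).neg.exp.aestronglyMeasurable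
      (Eventually.of_forall fun ω => by
        rw [Real.norm_of_nonneg (Real.exp_pos _).le]; exact exp_neg_mul_le_one ht (hY0 ω))
  rw [← ofReal_integral_eq_lintegral_ofReal (f := fun ω => C * (1 - Real.exp (-(t * Y ω))))
    (((integrable_const 1).sub hexp).const_mul C)
    (Eventually.of_forall fun ω => mul_nonneg hC (sub_nonneg.2 (exp_neg_mul_le_one ht (hY0 ω)))),
    integral_const_mul, integral_sub (integrable_const 1) hexp]
  simp [mgf, neg_mul]

lemma measure_le_sum_le_ofReal_mgf [IsProbabilityMeasure P] {X : ℕ → Ω → ℝ}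
    (hmeas : ∀ j, Measurable (X j)) (hnonneg : ∀ j ω, 0 ≤ X j ω)
    (hident : ∀ j, IdentDistrib (X j) (X 0) P P) {f : ℝ → ℝ≥0∞} (hf : Measurable f)
    {C t : ℝ} (hC : 0 ≤ C) (ht : 0 ≤ t)
    (hfle : ∀ x, 0 ≤ x → f x ≤ ENNReal.ofReal (C * (1 - Real.exp (-(t * x)))))
    (p : ℕ) {a : ℝ≥0∞} (ha : a ≠ 0) (ha' : a ≠ ⊤) :
    P {ω | a ≤ ∑ j ∈ range p, f (X j ω)}
      ≤ ENNReal.ofReal (p * (C * (1 - mgf (X 0) P (-t)))) / a := by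
  calc P {ω | a ≤ ∑ j ∈ range p, f (X j ω)}
      ≤ (∫⁻ ω, ∑ j ∈ range p, f (X j ω) ∂P) / a :=
        meas_ge_le_lintegral_div (Finset.aemeasurable_fun_sum _ fun j _ =>
          (hf.comp (hmeas j)).aemeasurable) ha ha'
    _ = p * (∫⁻ ω, f (X 0 ω) ∂P) / a := by
        rw [lintegral_sum_comp_eq_card_mul (fun j _ => hident j) hf, card_range]
    _ ≤ p * (∫⁻ ω, ENNReal.ofReal (C * (1 - Real.exp (-(t * X 0 ω)))) ∂P) / a := by
        gcongr with ω; exact hfle _ (hnonneg 0 ω)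
    _ = ENNReal.ofReal (p * (C * (1 - mgf (X 0) P (-t)))) / a := by
        rw [lintegral_ofReal_mul_one_sub_exp (hmeas 0) (hnonneg 0) hC ht, ENNReal.ofReal_mul
          p.cast_nonneg, ENNReal.ofReal_natCast]

lemma mgf_neg_le_one [IsProbabilityMeasure P] {Y : Ω → ℝ} (hY0 : ∀ ω, 0 ≤ Y ω) {t : ℝ}
    (ht : 0 ≤ t) : mgf Y P (-t) ≤ 1 :=
  calc mgf Y P (-t) = ∫ ω, Real.exp (-(t * Y ω)) ∂P := by simp [mgf, neg_mul]
    _ ≤ ∫ _, (1 : ℝ) ∂P := integral_mono_of_nonneg (ae_of_all _ fun _ => (Real.exp_pos _).le)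
        (integrable_const 1) (ae_of_all _ fun ω => exp_neg_mul_le_one ht (hY0 ω))
    _ = 1 := by simp

lemma measure_sumBelowOrderStat_ge_le [IsProbabilityMeasure P] {X : ℕ → Ω → ℝ}
    (hmeas : ∀ j, Measurable (X j)) (hnonneg : ∀ j ω, 0 ≤ X j ω)
    (hident : ∀ j, IdentDistrib (X j) (X 0) P P)
    {t ε : ℝ} (ht : 0 < t) (hε : 0 < ε) {p k : ℕ} (hk : 1 ≤ k) (hkp : k ≤ p) :
    P {ω | ε ≤ sumBelowOrderStat (fun j => X j ω) p k}
      ≤ ENNReal.ofReal (p * (3 / t * (1 - mgf (X 0) P (-t)))) / ENNReal.ofReal ε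
        + ENNReal.ofReal (p * ((1 - Real.exp (-1))⁻¹ * (1 - mgf (X 0) P (-t)))) / k := by
  have hsmall : Measurable fun x : ℝ => ENNReal.ofReal (if x ≤ t⁻¹ then x else 0) :=
    (Measurable.ite measurableSet_Iic measurable_id measurable_const).ennreal_ofReal
  have hlarge : Measurable ((Set.Ioi t⁻¹).indicator fun _ => (1 : ℝ≥0∞)) :=
    measurable_const.indicator measurableSet_Ioi
  have hsub : {ω | ε ≤ sumBelowOrderStat (fun j => X j ω) p k}
      ⊆ {ω | ENNReal.ofReal ε ≤ ∑ j ∈ range p, ENNReal.ofReal (if X j ω ≤ t⁻¹ then X j ω else 0)}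
        ∪ {ω | (k : ℝ≥0∞) ≤ ∑ j ∈ range p, (Set.Ioi t⁻¹).indicator (fun _ => 1) (X j ω)} := by
    intro ω hω
    by_cases hcard : k ≤ #{j ∈ range p | t⁻¹ < X j ω}
    · right
      have hsum : ∑ j ∈ range p, (Set.Ioi t⁻¹).indicator (fun _ => (1 : ℝ≥0∞)) (X j ω)
          = #{j ∈ range p | t⁻¹ < X j ω} := by
        rw [card_filter, Nat.cast_sum]
        refine sum_congr rfl fun j _ => ?_
        by_cases h : t⁻¹ < X j ω <;> simp [h]
      change (k : ℝ≥0∞) ≤ _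
      rw [hsum]
      exact_mod_cast hcard
    · left
      have hle := sumBelowOrderStat_le_of_card_lt (hnonneg · ω) hk hkp (not_le.1 hcard)
      change ENNReal.ofReal ε ≤ _
      rw [← ENNReal.ofReal_sum_of_nonneg fun j _ => by
        split_ifs; exacts [hnonneg j ω, le_rfl]]
      exact ENNReal.ofReal_le_ofReal (le_trans hω hle)
  calc P {ω | ε ≤ sumBelowOrderStat (fun j => X j ω) p k}
      ≤ _ := measure_mono hsub
    _ ≤ _ := measure_union_le _ _
    _ ≤ _ := add_le_add
        (measure_le_sum_le_ofReal_mgf hmeas hnonneg hident hsmall (by positivity) ht.le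
          (fun x hx => ENNReal.ofReal_le_ofReal (ite_le_inv_le_one_sub_exp ht hx)) p
          (ENNReal.ofReal_pos.2 hε).ne' ENNReal.ofReal_ne_top)
        (measure_le_sum_le_ofReal_mgf hmeas hnonneg hident hlarge
          (inv_nonneg.2 (sub_nonneg.2 (Real.exp_le_one_iff.2 (by norm_num)))) ht.le
          (fun x _ => indicator_Ioi_inv_le_one_sub_exp ht) p
          (by exact_mod_cast (by omega : k ≠ 0)) (ENNReal.natCast_ne_top k))

end Row

lemma eventually_measure_sumBelowOrderStat_ge_le {Ω : Type*} [MeasurableSpace Ω] {P : Measure Ω}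
    [IsProbabilityMeasure P] {X : ℕ → ℕ → Ω → ℝ} (hmeas : ∀ p j, Measurable (X p j))
    (hnonneg : ∀ p j ω, 0 ≤ X p j ω) (hident : ∀ p j, IdentDistrib (X p j) (X p 0) P P)
    {κ t ε B r : ℝ} (hκ0 : 0 < κ) (hκ1 : κ ≤ 1) (ht : 0 < t) (hε : 0 < ε)
    (hB : ∀ᶠ p : ℕ in atTop, p * (1 - mgf (X p 0) P (-t)) ≤ B) (hr : 3 / t * B / ε < r) :
    ∀ᶠ p : ℕ in atTop,
      P {ω | ε ≤ sumBelowOrderStat (fun j => X p j ω) p ⌊κ * p⌋₊} ≤ ENNReal.ofReal r := by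
  set c := 1 - Real.exp (-1)
  have hc : 0 < c := sub_pos.2 (Real.exp_lt_one_iff.2 (by norm_num))
  have hk : Tendsto (fun p : ℕ => ⌊κ * p⌋₊) atTop atTop :=
    tendsto_nat_floor_atTop.comp (tendsto_natCast_atTop_atTop.const_mul_atTop hκ0)
  have hlarge := ((tendsto_const_div_atTop_nhds_zero_nat (c⁻¹ * B)).comp hk).eventually
    (eventually_le_nhds (sub_pos.2 hr))
  filter_upwards [hB, hk.eventually_ge_atTop 1, hlarge] with p hpB hk1 hpk
  set k := ⌊κ * p⌋₊
  set A := (p : ℝ) * (1 - mgf (X p 0) P (-t))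
  have hkp : k ≤ p := Nat.floor_le_of_le (mul_le_of_le_one_left p.cast_nonneg hκ1)
  have hk0 : (0 : ℝ) < k := by exact_mod_cast hk1
  have hA : 0 ≤ A := mul_nonneg p.cast_nonneg (sub_nonneg.2 (mgf_neg_le_one (hnonneg p 0) ht.le))
  calc P {ω | ε ≤ sumBelowOrderStat (fun j => X p j ω) p k}
      ≤ ENNReal.ofReal (p * (3 / t * (1 - mgf (X p 0) P (-t)))) / ENNReal.ofReal ε
        + ENNReal.ofReal (p * (c⁻¹ * (1 - mgf (X p 0) P (-t)))) / k :=
        measure_sumBelowOrderStat_ge_le (hmeas p) (hnonneg p) (hident p) ht hε hk1 hkp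
    _ = ENNReal.ofReal (3 / t * A / ε + c⁻¹ * A / k) := by
        rw [mul_left_comm _ (3 / t), mul_left_comm _ c⁻¹, ← ENNReal.ofReal_natCast,
          ← ENNReal.ofReal_div_of_pos hε, ← ENNReal.ofReal_div_of_pos hk0,
          ← ENNReal.ofReal_add (div_nonneg (mul_nonneg (by positivity) hA) hε.le)
            (div_nonneg (mul_nonneg (by positivity) hA) hk0.le)]
    _ ≤ ENNReal.ofReal (3 / t * B / ε + (r - 3 / t * B / ε)) := by
        refine ENNReal.ofReal_le_ofReal (add_le_add (by gcongr) (le_trans ?_ hpk))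
        simp only [Function.comp_apply]
        gcongr
    _ = ENNReal.ofReal r := by rw [add_sub_cancel]

lemma ae_nonneg_of_tendstoInDist {Ω : Type*} [MeasurableSpace Ω] {P : Measure Ω}
    {S : ℕ → Ω → ℝ} {μ : Measure ℝ} [IsFiniteMeasure μ] (hS : ∀ p ω, 0 ≤ S p ω)
    (h : TendstoInDist P S μ) : ∀ᵐ x ∂μ, 0 ≤ x := by
  let f : BoundedContinuousFunction ℝ ℝ :=
    .ofNormedAddCommGroup (fun x => min 1 (max 0 (-x))) (by fun_prop) 1 fun x => by
      rw [Real.norm_of_nonneg (le_min zero_le_one (le_max_left _ _))]; exact min_le_left _ _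
  have hf0 : ∀ x, 0 ≤ f x := fun x => le_min zero_le_one (le_max_left _ _)
  have hSf : ∀ p ω, f (S p ω) = 0 := fun p ω => by
    simp [f, max_eq_left (neg_nonpos.2 (hS p ω))]
  have hint : ∫ x, f x ∂μ = 0 :=
    tendsto_nhds_unique (h f) (by simp [hSf])
  filter_upwards [(integral_eq_zero_iff_of_nonneg hf0 (f.integrable μ)).1 hint] with x hx
  by_contra! hneg
  have : 0 < f x := lt_min one_pos (lt_max_of_lt_right (neg_pos.2 hneg))
  exact this.ne' hx

def laplaceExponent (ρ : Measure ℝ) (t : ℝ) : ℝ :=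
  ∫ w, (1 - Real.exp (-(t * w))) ∂ρ

lemma IsLevyMeasure.ae_pos {ρ : Measure ℝ} (hρ : IsLevyMeasure ρ) : ∀ᵐ w ∂ρ, 0 < w :=
  measure_mono_null (fun w (hw : ¬0 < w) => not_lt.1 hw) hρ.1

lemma IsLevyMeasure.integrable_min_one {ρ : Measure ℝ} (hρ : IsLevyMeasure ρ) :
    Integrable (fun w => min 1 w) ρ := by
  refine ⟨(continuous_const.min continuous_id).aestronglyMeasurable, ?_⟩
  rw [hasFiniteIntegral_iff_ofReal (hρ.ae_pos.mono fun w hw => le_min zero_le_one hw.le)]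
  exact lt_top_iff_ne_top.2 hρ.2

lemma IsLevyMeasure.tendsto_laplaceExponent_div {ρ : Measure ℝ} (hρ : IsLevyMeasure ρ) :
    Tendsto (fun t => laplaceExponent ρ t / t) atTop (𝓝 0) := by
  have hnonneg : ∀ {t w : ℝ}, 0 ≤ t → 0 ≤ w → 0 ≤ (1 - Real.exp (-(t * w))) / t :=
    fun ht hw => div_nonneg (sub_nonneg.2 (exp_neg_mul_le_one ht hw)) ht
  have hdct := tendsto_integral_filter_of_dominated_convergence (μ := ρ) (l := atTop)
    (F := fun t w => (1 - Real.exp (-(t * w))) / t) (f := fun _ => 0) (fun w => min 1 w)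
    (Eventually.of_forall fun t => (by fun_prop : Continuous fun w =>
      (1 - Real.exp (-(t * w))) / t).aestronglyMeasurable)
    (by
      filter_upwards [eventually_ge_atTop 1] with t ht
      filter_upwards [hρ.ae_pos] with w hw
      have hmin := one_sub_exp_neg_mul_div_le (one_pos.trans_le ht) w
      rw [Real.norm_of_nonneg (hnonneg (zero_le_one.trans ht) hw.le)]
      exact hmin.trans (min_le_min_right _ (inv_le_one_of_one_le₀ ht)))
    hρ.integrable_min_one
    (by
      filter_upwards [hρ.ae_pos] with w hw
      refine squeeze_zero' ?_ ?_ tendsto_inv_atTop_zero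
      · filter_upwards [eventually_ge_atTop 0] with t ht using hnonneg ht hw.le
      · filter_upwards [eventually_gt_atTop 0] with t ht
        exact (one_sub_exp_neg_mul_div_le ht w).trans (min_le_left _ _))
  simpa [laplaceExponent, integral_div] using hdct

lemma tendsto_mgf_pow_of_tendstoInDist {Ω : Type*} [MeasurableSpace Ω] {P : Measure Ω}
    {X : ℕ → ℕ → Ω → ℝ} (hmeas : ∀ p j, Measurable (X p j)) (hnonneg : ∀ p j ω, 0 ≤ X p j ω)
    (hindep : ∀ p, iIndepFun (X p) P) (hident : ∀ p i j, IdentDistrib (X p i) (X p j) P P)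
    {μ : Measure ℝ} (hμ : ∀ᵐ x ∂μ, 0 ≤ x)
    (hconv : TendstoInDist P (fun p ω => ∑ j ∈ range p, X p j ω) μ) {t : ℝ} (ht : 0 ≤ t) :
    Tendsto (fun p => mgf (X p 0) P (-t) ^ p) atTop (𝓝 (∫ x, Real.exp (-(t * x)) ∂μ)) := by
  let f : BoundedContinuousFunction ℝ ℝ :=
    .ofNormedAddCommGroup (fun x => min 1 (Real.exp (-(t * x)))) (by fun_prop) 1 fun x => by
      rw [Real.norm_of_nonneg (le_min zero_le_one (Real.exp_pos _).le)]; exact min_le_left _ _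
  have hf : ∀ x, 0 ≤ x → f x = Real.exp (-(t * x)) := fun x hx =>
    min_eq_right (exp_neg_mul_le_one ht hx)
  have hlim : ∫ x, f x ∂μ = ∫ x, Real.exp (-(t * x)) ∂μ :=
    integral_congr_ae (hμ.mono fun x hx => hf x hx)
  refine hlim ▸ (hconv f).congr' ?_
  filter_upwards [eventually_ge_atTop 1] with p hp
  calc ∫ ω, f (∑ j ∈ range p, X p j ω) ∂P
      = mgf (∑ j ∈ range p, X p j) P (-t) := by
        refine integral_congr_ae (Eventually.of_forall fun ω => ?_)
        simp [hf _ (sum_nonneg fun j _ => hnonneg p j ω), neg_mul]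
    _ = mgf (X p 0) P (-t) ^ p := by
        rw [mgf_sum_of_identDistrib (hmeas p) (hindep p) (fun i _ j _ => hident p i j)
          (mem_range.2 hp) (-t), card_range]

lemma eventually_natCast_mul_one_sub_le {a : ℕ → ℝ} {L M : ℝ} (ha : ∀ p, 0 ≤ a p)
    (h : Tendsto (fun p => a p ^ p) atTop (𝓝 (Real.exp (-L)))) (hLM : L < M) :
    ∀ᶠ p : ℕ in atTop, p * (1 - a p) ≤ M := by
  have hlt : Real.exp (-M) < Real.exp (-L) := Real.exp_lt_exp.2 (neg_lt_neg hLM)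
  filter_upwards [h.eventually (eventually_gt_nhds hlt), eventually_ge_atTop 1] with p hp hp1
  have hpos : 0 < a p := (ha p).lt_of_ne fun h0 => by
    rw [← h0, zero_pow (by omega)] at hp; exact (Real.exp_pos _).not_gt hp
  have hlog : -M < p * Real.log (a p) := by
    simpa [Real.log_pow] using Real.log_lt_log (Real.exp_pos _) hp
  nlinarith [Real.log_le_sub_one_of_pos hpos, (Nat.cast_nonneg p : (0 : ℝ) ≤ p)]

/-- If the row sums of a nonnegative triangular array converge in distribution to
`ID(0,ρ)` (zero drift), then for every `κ ∈ (0,1)` the total mass of all entries at or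
below the `⌊κp⌋`-th largest value converges in probability to `0`. -/
theorem stmt_14 {Ω : Type*} [MeasurableSpace Ω] (P : Measure Ω) [IsProbabilityMeasure P]
    (X : ℕ → ℕ → Ω → ℝ)
    (hmeas : ∀ p j, Measurable (X p j))
    (hnonneg : ∀ p j ω, 0 ≤ X p j ω)
    (hindep : ∀ p, iIndepFun (X p) P)
    (hident : ∀ p i j, IdentDistrib (X p i) (X p j) P P)
    (ρ : Measure ℝ) (hρ : IsLevyMeasure ρ)
    (μlim : Measure ℝ) (hprob : IsProbabilityMeasure μlim) (hID : IsID μlim 0 ρ)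
    (hconv : TendstoInDist P (fun p ω => ∑ j ∈ Finset.range p, X p j ω) μlim) :
    ∀ κ : ℝ, κ ∈ Set.Ioo (0 : ℝ) 1 →
      TendstoInMeasure P
        (fun p ω => ∑ j ∈ Finset.range p,
          if X p j ω ≤ orderStatDesc ((List.range p).map fun i => X p i ω) ⌊κ * p⌋₊
          then X p j ω else 0)
        atTop (fun _ => 0) := by
  rintro κ ⟨hκ0, hκ1⟩
  have hμ0 := ae_nonneg_of_tendstoInDist (fun p ω => sum_nonneg fun j _ => hnonneg p j ω) hconv
  have hB (t : ℝ) (ht : 0 ≤ t) :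
      ∀ᶠ p : ℕ in atTop, p * (1 - mgf (X p 0) P (-t)) ≤ laplaceExponent ρ t + 1 :=
    eventually_natCast_mul_one_sub_le (fun _ => mgf_nonneg) (by
      simpa [hID t ht, laplaceExponent] using
        tendsto_mgf_pow_of_tendstoInDist hmeas hnonneg hindep hident hμ0 hconv ht) (lt_add_one _)
  rw [tendstoInMeasure_iff_dist]
  intro ε hε
  have hsmall : Tendsto (fun t => 3 / t * (laplaceExponent ρ t + 1) / ε) atTop (𝓝 0) := by
    have := (hρ.tendsto_laplaceExponent_div.add tendsto_inv_atTop_zero).const_mul (3 / ε)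
    rw [add_zero, mul_zero] at this
    refine this.congr' ?_
    filter_upwards [eventually_ne_atTop 0] with t ht
    field_simp
  rw [ENNReal.tendsto_nhds_zero]
  intro η hη
  obtain ⟨r, -, hr, hrη⟩ := ENNReal.lt_iff_exists_real_btwn.1 hη
  obtain ⟨t, htr, ht⟩ := ((hsmall.eventually (eventually_lt_nhds (ENNReal.ofReal_pos.1 hr))).and
    (eventually_gt_atTop 0)).exists
  filter_upwards [eventually_measure_sumBelowOrderStat_ge_le hmeas hnonneg (fun p j => hident p j 0)
    hκ0 hκ1.le ht hε (hB t ht.le) htr] with p hp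
  refine (measure_mono fun ω
    (hω : ε ≤ dist (sumBelowOrderStat (X p · ω) p ⌊κ * p⌋₊) 0) => ?_).trans (hp.trans hrη.le)
  rwa [dist_zero_right, Real.norm_of_nonneg (sumBelowOrderStat_nonneg (hnonneg p · ω) _ _)] at hω

end
end

section
/- Every continuous function g from the one-point compactification of the cone K_d of d×d real positive semi-definite matrices to ℝ can be uniformly approximated by finite linear combinations of functions x ↦ exp(-⟨x, θ⟩) with θ ∈ K_d, where ⟨·,·⟩ is the trace inner product. -/
/-!
Stone–Weierstrass on the compact space `OnePoint K_d`. For `v : n → ℝ` the function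
`A ↦ exp (-tr (A (1 + v vᵀ))) = exp (-(tr A + vᵀ A v))` tends to `0` at infinity, because
`tr A ≥ |A i j|` on the cone makes `tr` proper there, so it extends by `0` to a continuous function
on `OnePoint K_d`. These functions separate points: `v = 0` separates `∞` from the cone, and
on the cone they recover every quadratic form `vᵀ A v`, which determines the symmetric matrix `A`.
Finite sums `∑ cᵢ exp (-tr (A θᵢ))` with `θᵢ ∈ K_d` form a subalgebra, since the exponents add
under multiplication, and it contains these functions, hence is dense.
-/

open scoped Topology
open Filter

namespace Matrix

variable {n : Type*}

lemma PosSemidef.sq_apply_le {A : Matrix n n ℝ} (hA : A.PosSemidef) (i j : n) :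
    A i j ^ 2 ≤ A i i * A j j := by
  have hdet := (hA.submatrix ![i, j]).det_nonneg
  have hsymm : A j i = A i j := by simpa using hA.isHermitian.apply i j
  simp only [det_fin_two, submatrix_apply, cons_val_zero, cons_val_one] at hdet
  rw [hsymm] at hdet
  linarith

variable [Fintype n]

lemma isClosed_setOf_posSemidef : IsClosed {A : Matrix n n ℝ | A.PosSemidef} := by
  simp only [posSemidef_iff_dotProduct_mulVec, Set.ofPred_and, Set.ofPred_forall]
  exact (isClosed_eq continuous_id.matrix_conjTranspose continuous_id).inter
    (isClosed_iInter fun v => isClosed_le continuous_const (by fun_prop))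

lemma PosSemidef.apply_le_trace {A : Matrix n n ℝ} (hA : A.PosSemidef) (i : n) :
    A i i ≤ A.trace :=
  Finset.single_le_sum (f := fun j => A j j) (fun _ _ => hA.diag_nonneg) (Finset.mem_univ i)

lemma PosSemidef.abs_apply_le_trace {A : Matrix n n ℝ} (hA : A.PosSemidef) (i j : n) :
    |A i j| ≤ A.trace := by
  refine abs_le_of_sq_le_sq (le_trans (hA.sq_apply_le i j) ?_) hA.trace_nonneg
  rw [sq]
  exact mul_le_mul (hA.apply_le_trace i) (hA.apply_le_trace j) hA.diag_nonneg hA.trace_nonneg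

lemma isCompact_setOf_posSemidef_trace_le (M : ℝ) :
    IsCompact {A : Matrix n n ℝ | A.PosSemidef ∧ A.trace ≤ M} := by
  have hbox : IsCompact (Set.univ.pi fun _ : n => Set.univ.pi fun _ : n => Set.Icc (-M) M) :=
    isCompact_univ_pi fun _ => isCompact_univ_pi fun _ => isCompact_Icc
  refine hbox.of_isClosed_subset
    (isClosed_setOf_posSemidef.inter (isClosed_le continuous_id.matrix_trace continuous_const)) ?_
  rintro A ⟨hA, hAM⟩ i - j -
  exact abs_le.mp ((hA.abs_apply_le_trace i j).trans hAM)

lemma trace_mul_vecMulVec_self (A : Matrix n n ℝ) (v : n → ℝ) :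
    (A * vecMulVec v v).trace = v ⬝ᵥ A *ᵥ v := by
  rw [mul_vecMulVec, trace_vecMulVec, dotProduct_comm]

lemma IsHermitian.ext_dotProduct_mulVec {A B : Matrix n n ℝ} (hA : A.IsHermitian)
    (hB : B.IsHermitian) (h : ∀ v, v ⬝ᵥ A *ᵥ v = v ⬝ᵥ B *ᵥ v) : A = B := by
  open scoped MatrixOrder in
  refine le_antisymm (le_iff.mpr (.of_dotProduct_mulVec_nonneg (hB.sub hA) fun v => ?_))
    (le_iff.mpr (.of_dotProduct_mulVec_nonneg (hA.sub hB) fun v => ?_)) <;>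
  simp [sub_mulVec, h]

lemma trace_mul_one_add_vecMulVec_self [DecidableEq n] (A : Matrix n n ℝ) (v : n → ℝ) :
    (A * (1 + vecMulVec v v)).trace = A.trace + v ⬝ᵥ A *ᵥ v := by
  rw [Matrix.mul_add, Matrix.mul_one, trace_add, trace_mul_vecMulVec_self]

end Matrix

open Matrix

abbrev PosSemidefCone (n : Type*) [Fintype n] := {A : Matrix n n ℝ // A.PosSemidef}

variable {n : Type*} [Fintype n]

lemma tendsto_trace_cocompact_atTop :
    Tendsto (fun A : PosSemidefCone n => A.1.trace) (cocompact _) atTop := by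
  refine tendsto_atTop.2 fun M => ?_
  have hK := (Topology.IsClosedEmbedding.subtypeVal isClosed_setOf_posSemidef).isCompact_preimage
    (isCompact_setOf_posSemidef_trace_le (n := n) M)
  filter_upwards [hK.compl_mem_cocompact] with A hA
  exact (not_le.1 fun hAM => hA ⟨A.2, hAM⟩).le

def IsExpSum (f : PosSemidefCone n → ℝ) : Prop :=
  ∃ (m : ℕ) (c : Fin m → ℝ) (θ : Fin m → PosSemidefCone n),
    ∀ A, f A = ∑ i, c i * Real.exp (-(A.1 * (θ i).1).trace)

namespace IsExpSum

lemma const (r : ℝ) : IsExpSum (fun _ : PosSemidefCone n => r) :=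
  ⟨1, fun _ => r, fun _ => ⟨0, .zero⟩, by simp⟩

lemma add {f g : PosSemidefCone n → ℝ} (hf : IsExpSum f) (hg : IsExpSum g) :
    IsExpSum (f + g) := by
  obtain ⟨m, c, θ, hf⟩ := hf
  obtain ⟨m', c', θ', hg⟩ := hg
  refine ⟨m + m', Fin.append c c', Fin.append θ θ', fun A => ?_⟩
  simp [hf, hg, Fin.sum_univ_add]

lemma mul {f g : PosSemidefCone n → ℝ} (hf : IsExpSum f) (hg : IsExpSum g) :
    IsExpSum (f * g) := by
  obtain ⟨m, c, θ, hf⟩ := hf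
  obtain ⟨m', c', θ', hg⟩ := hg
  let e := (finProdFinEquiv (m := m) (n := m')).symm
  refine ⟨m * m', fun k => c (e k).1 * c' (e k).2,
    fun k => ⟨(θ (e k).1).1 + (θ' (e k).2).1, (θ _).2.add (θ' _).2⟩, fun A => ?_⟩
  rw [Pi.mul_apply, hf, hg, Finset.sum_mul_sum, ← Fintype.sum_prod_type', ← e.sum_comp]
  refine Fintype.sum_congr _ _ fun k => ?_
  rw [Matrix.mul_add, trace_add, neg_add, Real.exp_add]
  ring

end IsExpSum

def expPolynomials : Subalgebra ℝ C(OnePoint (PosSemidefCone n), ℝ) where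
  carrier := {f | IsExpSum fun A : PosSemidefCone n => f A}
  mul_mem' hf hg := hf.mul hg
  add_mem' hf hg := hf.add hg
  algebraMap_mem' r := IsExpSum.const r

section Generators

variable [DecidableEq n]

lemma tendsto_exp_neg_trace_mul_one_add_vecMulVec (v : n → ℝ) :
    Tendsto (fun A : PosSemidefCone n => Real.exp (-(A.1 * (1 + vecMulVec v v)).trace))
      (cocompact _) (𝓝 0) := by
  refine Real.tendsto_exp_neg_atTop_nhds_zero.comp (tendsto_atTop_mono (fun A => ?_)
    tendsto_trace_cocompact_atTop)
  rw [trace_mul_one_add_vecMulVec_self]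
  simpa using A.2.dotProduct_mulVec_nonneg v

noncomputable def laplaceKernel (v : n → ℝ) : C(OnePoint (PosSemidefCone n), ℝ) :=
  OnePoint.continuousMapMk
    ⟨fun A => Real.exp (-(A.1 * (1 + vecMulVec v v)).trace), by fun_prop⟩ 0 <| by
    rw [coclosedCompact_eq_cocompact]
    exact tendsto_exp_neg_trace_mul_one_add_vecMulVec v

@[simp]
lemma laplaceKernel_infty (v : n → ℝ) : laplaceKernel v OnePoint.infty = 0 := rfl

@[simp]
lemma laplaceKernel_coe (v : n → ℝ) (A : PosSemidefCone n) :
    laplaceKernel v A = Real.exp (-(A.1 * (1 + vecMulVec v v)).trace) := rfl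

lemma laplaceKernel_mem_expPolynomials (v : n → ℝ) : laplaceKernel v ∈ expPolynomials :=
  ⟨1, fun _ => 1,
    fun _ => ⟨1 + vecMulVec v v, .add .one (by simpa using posSemidef_vecMulVec_self_star v)⟩,
    fun A => by simp⟩

lemma laplaceKernel_injective :
    Function.Injective fun (x : OnePoint (PosSemidefCone n)) (v : n → ℝ) => laplaceKernel v x := by
  intro x y h
  induction x using OnePoint.rec <;> induction y using OnePoint.rec
  · rfl
  · exact absurd (by simpa using congrFun h 0) (Real.exp_pos _).ne
  · simpa using congrFun h 0
  case coe.coe a b =>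
    have hq (v : n → ℝ) : a.1.trace + v ⬝ᵥ a.1 *ᵥ v = b.1.trace + v ⬝ᵥ b.1 *ᵥ v := by
      have hv := congrFun h v
      simp only [laplaceKernel_coe, Real.exp_eq_exp, trace_mul_one_add_vecMulVec_self] at hv
      linarith
    have htr : a.1.trace = b.1.trace := by simpa using hq 0
    refine congrArg _ (Subtype.ext (a.2.isHermitian.ext_dotProduct_mulVec b.2.isHermitian
      fun v => ?_))
    linarith [hq v]

lemma expPolynomials_separatesPoints : (expPolynomials (n := n)).SeparatesPoints := by
  intro x y hxy
  obtain ⟨v, hv⟩ := Function.ne_iff.mp (laplaceKernel_injective.ne hxy)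
  exact ⟨_, ⟨laplaceKernel v, laplaceKernel_mem_expPolynomials v, rfl⟩, hv⟩

end Generators

/-- Stone–Weierstrass on the one-point compactification of the cone `K_d` of `d×d`
positive semi-definite real matrices: every continuous function on `K_d ∪ {Δ}` can be
uniformly approximated by finite linear combinations of `x ↦ exp(-⟨x,θ⟩)` with
`θ ∈ K_d`, where `⟨A,B⟩ = tr(AB)`. -/
theorem stmt_15 (d : ℕ)
    (g : OnePoint {A : Matrix (Fin d) (Fin d) ℝ // A.PosSemidef} → ℝ)
    (hg : Continuous g) :
    ∀ ε : ℝ, 0 < ε →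
      ∃ (n : ℕ) (c : Fin n → ℝ)
        (θ : Fin n → {A : Matrix (Fin d) (Fin d) ℝ // A.PosSemidef}),
        ∀ A : {A : Matrix (Fin d) (Fin d) ℝ // A.PosSemidef},
          |g (OnePoint.some A) -
            ∑ i, c i * Real.exp (-((A.1 * (θ i).1).trace))| ≤ ε := by
  intro ε hε
  obtain ⟨⟨f, m, c, θ, hf⟩, hfg⟩ :=
    ContinuousMap.exists_mem_subalgebra_near_continuous_of_separatesPoints expPolynomials
      expPolynomials_separatesPoints g hg ε hε
  refine ⟨m, c, θ, fun A => ?_⟩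
  rw [← hf A, abs_sub_comm]
  exact (hfg A).le
end

section
/- Let X₁ be a nonnegative random variable with P(X₁ > x) ~ c x^{-α} as x → ∞ for some c, α > 0, let X₂ be an independent nonnegative random variable with E[X₂^α] < ∞. Then P(X₁X₂ > x) ~ E[X₂^α] · P(X₁ > x) as x → ∞. -/
/-!
Condition on `X₂ = y`: by independence, `P(X₁X₂ > x) = E[G(x / X₂); X₂ > 0]` with `G` the tail of
`X₁`. Divided by `c x^{-α}`, the integrand tends to `X₂^α` pointwise, and it is dominated by a
multiple of `X₂^α`: where `x / X₂ ≥ T` by the tail asymptotics, elsewhere because `G ≤ 1` and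
`x^α < T^α X₂^α`. Dominated convergence gives `P(X₁X₂ > x) ~ E[X₂^α] c x^{-α}`, and the tail
asymptotics once more turn `c x^{-α}` into `P(X₁ > x)`.
-/

open MeasureTheory ProbabilityTheory Filter Topology

theorem Filter.Tendsto.div_of_tendsto_div_one {𝕜 ι : Type*} [NormedField 𝕜] {l : Filter ι}
    {f g d : ι → 𝕜} {a : 𝕜} (hf : Tendsto (fun i => f i / d i) l (𝓝 a))
    (hg : Tendsto (fun i => g i / d i) l (𝓝 1)) :
    Tendsto (fun i => f i / g i) l (𝓝 a) := by
  have hd : ∀ᶠ i in l, d i ≠ 0 := (hg.eventually_ne one_ne_zero).mono fun i hi hd => by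
    simp [hd] at hi
  simpa using (hf.mul (hg.inv₀ one_ne_zero)).congr' <| hd.mono fun i hi => by
    rw [inv_div, div_mul_div_cancel₀ hi]

theorem Real.div_rpow_neg {x y : ℝ} (hx : 0 ≤ x) (hy : 0 ≤ y) (α : ℝ) :
    (x / y) ^ (-α) = x ^ (-α) * y ^ α := by
  rw [Real.div_rpow hx hy, Real.rpow_neg hy, div_inv_eq_mul]

section RegularTail

variable {G : ℝ → ℝ} {c α : ℝ}

theorem tendsto_comp_div_div_rpow
    (hG : Tendsto (fun x => G x / (c * x ^ (-α))) atTop (𝓝 1)) {y : ℝ} (hy : 0 < y) :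
    Tendsto (fun x => G (x / y) / (c * x ^ (-α))) atTop (𝓝 (y ^ α)) := by
  have hyα : y ^ α ≠ 0 := (Real.rpow_pos_of_pos hy α).ne'
  simpa using ((hG.comp (tendsto_id.atTop_div_const hy)).mul_const (y ^ α)).congr' <|
    (eventually_ge_atTop 0).mono fun x hx => by
      simp only [Function.comp_apply, id, Real.div_rpow_neg hx hy.le]
      rw [← mul_assoc, div_mul_eq_mul_div, mul_div_mul_right _ _ hyα]

theorem exists_eventually_norm_comp_div_div_rpow_le (hc : 0 < c) (hα : 0 ≤ α)
    (hG : Tendsto (fun x => G x / (c * x ^ (-α))) atTop (𝓝 1)) {B : ℝ} (hB : ∀ t, ‖G t‖ ≤ B) :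
    ∃ C, ∀ᶠ x in atTop, ∀ y, 0 < y → ‖G (x / y) / (c * x ^ (-α))‖ ≤ C * y ^ α := by
  obtain ⟨T₀, hT₀⟩ := eventually_atTop.mp <|
    hG.norm.eventually_lt_const (show ‖(1 : ℝ)‖ < 2 by norm_num)
  set T := max T₀ 1
  have hT : 0 < T := lt_of_lt_of_le one_pos (le_max_right _ _)
  refine ⟨2 + B * T ^ α / c, ?_⟩
  filter_upwards [eventually_ge_atTop T] with x hxT y hy
  have hx : 0 < x := hT.trans_le hxT
  have hB0 : 0 ≤ B := (norm_nonneg _).trans (hB 0)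
  have hyα : 0 < y ^ α := Real.rpow_pos_of_pos hy α
  have hscale : 0 < c * x ^ (-α) := mul_pos hc (Real.rpow_pos_of_pos hx _)
  rw [norm_div, Real.norm_of_nonneg hscale.le]
  have hrest : 0 ≤ B * T ^ α / c * y ^ α := by positivity
  rcases le_or_gt T (x / y) with hlarge | hsmall
  · have hxy_pos : 0 < x / y := hT.trans_le hlarge
    have hratio := (hT₀ (x / y) ((le_max_left _ _).trans hlarge)).le
    calc ‖G (x / y)‖ / (c * x ^ (-α))
        = ‖G (x / y) / (c * (x / y) ^ (-α))‖ * y ^ α := by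
          rw [norm_div, Real.norm_of_nonneg (mul_pos hc (Real.rpow_pos_of_pos hxy_pos _)).le,
            Real.div_rpow_neg hx.le hy.le]
          field_simp
      _ ≤ 2 * y ^ α := by gcongr
      _ ≤ (2 + B * T ^ α / c) * y ^ α := by linarith
  · have hxy : x ^ α ≤ T ^ α * y ^ α := by
      rw [← Real.mul_rpow hT.le hy.le]
      exact Real.rpow_le_rpow hx.le ((div_lt_iff₀ hy).mp hsmall).le hα
    have hsmall_bound : ‖G (x / y)‖ / (c * x ^ (-α)) ≤ B * T ^ α / c * y ^ α := by
      rw [div_le_iff₀ hscale, Real.rpow_neg hx.le]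
      calc ‖G (x / y)‖ ≤ B := hB _
        _ ≤ B * (T ^ α * y ^ α) / x ^ α := by
          rw [le_div_iff₀ (Real.rpow_pos_of_pos hx α)]
          exact mul_le_mul_of_nonneg_left hxy hB0
        _ = _ := by field_simp
    linarith [hyα]

theorem tendsto_integral_comp_div_div_rpow {ν : Measure ℝ} (hc : 0 < c) (hα : 0 < α)
    (hGm : Measurable G) {B : ℝ} (hB : ∀ t, ‖G t‖ ≤ B)
    (hG : Tendsto (fun x => G x / (c * x ^ (-α))) atTop (𝓝 1))
    (hν : ∀ᵐ y ∂ν, 0 ≤ y) (hint : Integrable (fun y => y ^ α) ν) :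
    Tendsto (fun x => (∫ y, (if 0 < y then G (x / y) else 0) ∂ν) / (c * x ^ (-α))) atTop
      (𝓝 (∫ y, y ^ α ∂ν)) := by
  obtain ⟨C, hC⟩ := exists_eventually_norm_comp_div_div_rpow_le hc hα.le hG hB
  simp_rw [← integral_div]
  refine tendsto_integral_filter_of_dominated_convergence (fun y => C * y ^ α)
    (Eventually.of_forall fun x => ?_) ?_ (hint.const_mul C) ?_
  · exact ((Measurable.ite (measurableSet_lt measurable_const measurable_id)
      (hGm.comp (measurable_const.div measurable_id)) measurable_const).div_const _)
      |>.aestronglyMeasurable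
  · filter_upwards [hC] with x hx
    filter_upwards [hν] with y hy
    rcases hy.lt_or_eq with hy | rfl
    · simpa [hy] using hx y hy
    · simp [Real.zero_rpow hα.ne']
  · filter_upwards [hν] with y hy
    rcases hy.lt_or_eq with hy | rfl
    · simpa [hy] using tendsto_comp_div_div_rpow hG hy
    · simp [Real.zero_rpow hα.ne']

end RegularTail

theorem antitone_measure_lt {Ω : Type*} [MeasurableSpace Ω] (P : Measure Ω) (X : Ω → ℝ) :
    Antitone fun t => P {ω | t < X ω} :=
  fun _ _ hst => measure_mono fun _ hω => lt_of_le_of_lt hst hω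

section ProductTail

variable {Ω : Type*} [MeasurableSpace Ω] {P : Measure Ω} {X₁ X₂ : Ω → ℝ}

theorem measure_lt_mul_eq_lintegral [IsFiniteMeasure P] (hm1 : Measurable X₁)
    (hm2 : Measurable X₂) (hindep : IndepFun X₁ X₂ P) (h2 : ∀ᵐ ω ∂P, 0 ≤ X₂ ω) {x : ℝ}
    (hx : 0 < x) :
    P {ω | x < X₁ ω * X₂ ω} =
      ∫⁻ y, (if 0 < y then P {ω | x / y < X₁ ω} else 0) ∂(P.map X₂) := by
  have hset : MeasurableSet {p : ℝ × ℝ | x < p.2 * p.1} :=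
    measurableSet_lt measurable_const (measurable_snd.mul measurable_fst)
  have hlaw : P.map (fun ω => (X₂ ω, X₁ ω)) = (P.map X₂).prod (P.map X₁) :=
    (indepFun_iff_map_prod_eq_prod_map_map hm2.aemeasurable hm1.aemeasurable).mp hindep.symm
  have hν : ∀ᵐ y ∂P.map X₂, 0 ≤ y :=
    (ae_map_iff hm2.aemeasurable (measurableSet_le measurable_const measurable_id)).mpr h2
  rw [show {ω | x < X₁ ω * X₂ ω} = (fun ω => (X₂ ω, X₁ ω)) ⁻¹' {p | x < p.2 * p.1} from rfl,
    ← Measure.map_apply (hm2.prodMk hm1) hset, hlaw, Measure.prod_apply hset]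
  refine lintegral_congr_ae (hν.mono fun y hy => ?_)
  rcases hy.lt_or_eq with hy | rfl
  · have hsection : Prod.mk y ⁻¹' {p : ℝ × ℝ | x < p.2 * p.1} = Set.Ioi (x / y) := by
      ext a
      simp [div_lt_iff₀ hy]
    simp only [if_pos hy, hsection, Measure.map_apply hm1 measurableSet_Ioi]
    rfl
  · simp [not_lt.mpr hx.le]

theorem toReal_measure_lt_mul_eq_integral [IsFiniteMeasure P] (hm1 : Measurable X₁)
    (hm2 : Measurable X₂) (hindep : IndepFun X₁ X₂ P) (h2 : ∀ᵐ ω ∂P, 0 ≤ X₂ ω) {x : ℝ}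
    (hx : 0 < x) :
    (P {ω | x < X₁ ω * X₂ ω}).toReal =
      ∫ y, (if 0 < y then (P {ω | x / y < X₁ ω}).toReal else 0) ∂(P.map X₂) := by
  rw [measure_lt_mul_eq_lintegral hm1 hm2 hindep h2 hx, ← integral_toReal]
  · simp only [apply_ite ENNReal.toReal, ENNReal.toReal_zero]
  · exact (Measurable.ite (measurableSet_lt measurable_const measurable_id)
      ((antitone_measure_lt P X₁).measurable.comp (measurable_const.div measurable_id))
      measurable_const).aemeasurable
  · exact ae_of_all _ fun y => by split <;> simp [measure_lt_top]

end ProductTail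

theorem stmt_17_general {Ω : Type*} [MeasurableSpace Ω] (P : Measure Ω) [IsProbabilityMeasure P]
    (X₁ X₂ : Ω → ℝ) (hm1 : Measurable X₁) (hm2 : Measurable X₂)
    (h2 : ∀ ω, 0 ≤ X₂ ω)
    (hindep : IndepFun X₁ X₂ P)
    (c α : ℝ) (hc : 0 < c) (hα : 0 < α)
    (htail : Tendsto (fun x : ℝ => (P {ω | x < X₁ ω}).toReal / (c * x ^ (-α)))
      atTop (𝓝 1))
    (hmom : Integrable (fun ω => X₂ ω ^ α) P) :
    Tendsto (fun x : ℝ =>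
        (P {ω | x < X₁ ω * X₂ ω}).toReal / (P {ω | x < X₁ ω}).toReal)
      atTop (𝓝 (∫ ω, X₂ ω ^ α ∂P)) := by
  have hpow : Measurable fun y : ℝ => y ^ α := (Real.continuous_rpow_const hα.le).measurable
  have hGm : Measurable fun t => (P {ω | t < X₁ ω}).toReal :=
    ENNReal.measurable_toReal.comp (antitone_measure_lt P X₁).measurable
  have hG1 : ∀ t, ‖(P {ω | t < X₁ ω}).toReal‖ ≤ 1 := fun _ => by
    rw [Real.norm_of_nonneg ENNReal.toReal_nonneg]
    exact measureReal_le_one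
  have hν : ∀ᵐ y ∂P.map X₂, 0 ≤ y :=
    (ae_map_iff hm2.aemeasurable (measurableSet_le measurable_const measurable_id)).mpr
      (ae_of_all _ h2)
  have hint : Integrable (fun y => y ^ α) (P.map X₂) :=
    (integrable_map_measure hpow.aestronglyMeasurable hm2.aemeasurable).mpr hmom
  have hprod : Tendsto (fun x : ℝ => (P {ω | x < X₁ ω * X₂ ω}).toReal / (c * x ^ (-α)))
      atTop (𝓝 (∫ ω, X₂ ω ^ α ∂P)) := by
    rw [← integral_map hm2.aemeasurable hpow.aestronglyMeasurable]
    refine (tendsto_integral_comp_div_div_rpow hc hα hGm hG1 htail hν hint).congr' ?_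
    filter_upwards [eventually_gt_atTop 0] with x hx
    rw [toReal_measure_lt_mul_eq_integral hm1 hm2 hindep (ae_of_all _ h2) hx]
  exact hprod.div_of_tendsto_div_one htail

/-- Breiman-type lemma: if `X₁` is nonnegative with `P(X₁ > x) ~ c x^{-α}` and `X₂` is
an independent nonnegative variable with `E[X₂^α] < ∞`, then
`P(X₁X₂ > x) ~ E[X₂^α] · P(X₁ > x)` as `x → ∞`. -/
theorem stmt_17 {Ω : Type*} [MeasurableSpace Ω] (P : Measure Ω) [IsProbabilityMeasure P]
    (X₁ X₂ : Ω → ℝ) (hm1 : Measurable X₁) (hm2 : Measurable X₂)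
    (h1 : ∀ ω, 0 ≤ X₁ ω) (h2 : ∀ ω, 0 ≤ X₂ ω)
    (hindep : IndepFun X₁ X₂ P)
    (c α : ℝ) (hc : 0 < c) (hα : 0 < α)
    (htail : Tendsto (fun x : ℝ => (P {ω | x < X₁ ω}).toReal / (c * x ^ (-α)))
      atTop (𝓝 1))
    (hmom : Integrable (fun ω => X₂ ω ^ α) P) :
    Tendsto (fun x : ℝ =>
        (P {ω | x < X₁ ω * X₂ ω}).toReal / (P {ω | x < X₁ ω}).toReal)
      atTop (𝓝 (∫ ω, X₂ ω ^ α ∂P)) :=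
  stmt_17_general P X₁ X₂ hm1 hm2 h2 hindep c α hc hα htail hmom
end

section
/- Let X₁, X₂, ... be iid standard normal and (ξ_i)_{i≥1} be the points of a Poisson point process on (0,∞) with mean measure ρ_stable(dz; α, c) = α c^α z^{-α-1} dz, independent of the X_i, with α ∈ (0,1), c > 0. Then Σ_{i≥1} ξ_i max(0, X_i)² has the same distribution as 2(Γ(1/2+α)/(2√π))^{1/α} · Σ_{i≥1} ξ_i. -/
/-!
Apply the Laplace functional to `g(z, x) = t z h(x)` for a nonnegative mark function `h`. The Lévy
measure `z^(-α-1) dz` is homogeneous, so `∫ (1 - e^(-s z)) z^(-α-1) dz = s^α K`, and averaging over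
the mark gives `E exp(-t ∑ ξᵢ h(Xᵢ)) = exp(-t^α E[h(X)^α] K)`: the law of the marked sum depends on
`h` only through `E[h(X)^α]`. For `h(x) = (x⁺)²` this Gaussian moment is `2^α Γ(α + 1/2) / (2√π)`,
which is `κ^α` for the constant mark `h ≡ κ`, so both sums have the same Laplace transform.
Finally a nonnegative random variable `S` is determined by the moments of `e^(-S) ∈ [0, 1]`,
by the Weierstrass approximation theorem.
-/

open MeasureTheory ProbabilityTheory Filter Real Set BoundedContinuousFunction
open scoped ENNReal

noncomputable def polynomialFunctionsIcc : StarSubalgebra ℝ (Icc (0 : ℝ) 1 →ᵇ ℝ) :=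
  { (polynomialFunctions (Icc (0 : ℝ) 1)).comap (toContinuousMapₐ ℝ) with
    star_mem' := fun {f} hf => by
      rwa [show star f = f from ext fun x => star_trivial (f x)] }

lemma polynomialFunctionsIcc_separatesPoints :
    (polynomialFunctionsIcc.map (toContinuousMapStarₐ ℝ)).SeparatesPoints := by
  refine Subalgebra.separatesPoints_monotone ?_ (polynomialFunctions_separatesPoints _)
  intro f hf
  exact ⟨mkOfCompact f, hf, rfl⟩

lemma exists_polynomial_of_mem_polynomialFunctionsIcc {g : Icc (0 : ℝ) 1 →ᵇ ℝ}
    (hg : g ∈ polynomialFunctionsIcc) : ∃ p : Polynomial ℝ, ∀ x, g x = p.eval (x : ℝ) := by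
  obtain ⟨p, -, hp⟩ := hg
  exact ⟨p, fun x => (DFunLike.congr_fun hp x).symm⟩

lemma MeasureTheory.Measure.ext_of_moments_Icc {μ ν : Measure (Icc (0 : ℝ) 1)}
    [IsFiniteMeasure μ] [IsFiniteMeasure ν]
    (h : ∀ n : ℕ, ∫ x, (x : ℝ) ^ n ∂μ = ∫ x, (x : ℝ) ^ n ∂ν) : μ = ν := by
  refine ext_of_forall_mem_subalgebra_integral_eq_of_pseudoEMetric_complete_countable
    polynomialFunctionsIcc_separatesPoints fun g hg => ?_
  obtain ⟨p, hp⟩ := exists_polynomial_of_mem_polynomialFunctionsIcc hg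
  have hint (κ : Measure (Icc (0 : ℝ) 1)) [IsFiniteMeasure κ] (n : ℕ) :
      Integrable (fun x : Icc (0 : ℝ) 1 => (x : ℝ) ^ n) κ :=
    (continuous_subtype_val.pow n).integrable_of_hasCompactSupport
      (HasCompactSupport.of_compactSpace _)
  simp_rw [hp, Polynomial.eval_eq_sum_range]
  rw [integral_finsetSum _ fun i _ => (hint μ i).const_mul _,
    integral_finsetSum _ fun i _ => (hint ν i).const_mul _]
  simp_rw [integral_const_mul, h]

lemma exp_neg_mem_Icc {s : ℝ} (hs : 0 ≤ s) : exp (-s) ∈ Icc (0 : ℝ) 1 :=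
  ⟨(exp_pos _).le, exp_le_one_iff.mpr (neg_nonpos.mpr hs)⟩

lemma identDistrib_of_integral_exp_neg_nat_mul_eq {Ω Ω' : Type*} [MeasurableSpace Ω]
    [MeasurableSpace Ω'] {P : Measure Ω} {P' : Measure Ω'} [IsFiniteMeasure P]
    [IsFiniteMeasure P'] {S : Ω → ℝ} {S' : Ω' → ℝ} (hS : Measurable S) (hS' : Measurable S')
    (hS0 : ∀ ω, 0 ≤ S ω) (hS0' : ∀ ω, 0 ≤ S' ω)
    (h : ∀ n : ℕ, ∫ ω, exp (-(n * S ω)) ∂P = ∫ ω, exp (-(n * S' ω)) ∂P') :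
    IdentDistrib S S' P P' := by
  let Y : Ω → Icc (0 : ℝ) 1 := fun ω => ⟨exp (-S ω), exp_neg_mem_Icc (hS0 ω)⟩
  let Y' : Ω' → Icc (0 : ℝ) 1 := fun ω => ⟨exp (-S' ω), exp_neg_mem_Icc (hS0' ω)⟩
  have hY : Measurable Y := (measurable_exp.comp hS.neg).subtype_mk
  have hY' : Measurable Y' := (measurable_exp.comp hS'.neg).subtype_mk
  have hlaw : IdentDistrib Y Y' P P' := by
    refine ⟨hY.aemeasurable, hY'.aemeasurable, Measure.ext_of_moments_Icc fun n => ?_⟩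
    rw [integral_map hY.aemeasurable (by fun_prop), integral_map hY'.aemeasurable (by fun_prop)]
    simpa only [Y, Y', ← exp_nat_mul, mul_neg] using h n
  convert hlaw.comp (u := fun y : Icc (0 : ℝ) 1 => -log y) (by fun_prop) <;>
    simp [Function.comp_def, Y, Y']

lemma setLIntegral_Ioi_comp_mul_left {f : ℝ → ℝ≥0∞} (hf : Measurable f) {a : ℝ} (ha : 0 < a) :
    ∫⁻ z in Ioi 0, f (a * z) = ENNReal.ofReal a⁻¹ * ∫⁻ z in Ioi 0, f z := by
  have hmap : (volume.restrict (Ioi 0)).map (a * ·)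
      = ENNReal.ofReal a⁻¹ • volume.restrict (Ioi 0) := by
    have hpre : Ioi (0 : ℝ) = (a * ·) ⁻¹' Ioi 0 := by
      rw [preimage_const_mul_Ioi₀ _ ha, zero_div]
    nth_rw 1 [hpre]
    rw [← Measure.restrict_map (measurable_const_mul a) measurableSet_Ioi,
      Real.map_volume_mul_left ha.ne', abs_of_pos (inv_pos.mpr ha), Measure.restrict_smul]
  rw [← lintegral_map hf (measurable_const_mul a), hmap, lintegral_smul_measure, smul_eq_mul]

lemma setLIntegral_Ioi_comp_mul_left_mul_rpow {f : ℝ → ℝ≥0∞} (hf : Measurable f) {a : ℝ}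
    (ha : 0 < a) (C p : ℝ) :
    ∫⁻ z in Ioi 0, f (a * z) * ENNReal.ofReal (C * z ^ p)
      = ENNReal.ofReal (a ^ (-p - 1)) * ∫⁻ z in Ioi 0, f z * ENNReal.ofReal (C * z ^ p) := by
  have hdensity : ∀ z ∈ Ioi (0 : ℝ), f (a * z) * ENNReal.ofReal (C * z ^ p)
      = f (a * z) * ENNReal.ofReal (C * (a * z) ^ p) * ENNReal.ofReal (a ^ (-p)) := by
    intro z hz
    rw [mul_assoc, ← ENNReal.ofReal_mul' (rpow_nonneg ha.le _), mul_assoc,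
      mul_rpow ha.le (le_of_lt hz), mul_right_comm, ← rpow_add ha, add_neg_cancel, rpow_zero,
      one_mul]
  rw [setLIntegral_congr_fun measurableSet_Ioi hdensity,
    lintegral_mul_const' _ _ ENNReal.ofReal_ne_top,
    setLIntegral_Ioi_comp_mul_left (f := fun z => f z * ENNReal.ofReal (C * z ^ p))
      (by fun_prop) ha,
    mul_right_comm, ← ENNReal.ofReal_mul (inv_nonneg.mpr ha.le), ← rpow_neg_one,
    ← rpow_add ha, neg_add_eq_sub]

lemma setLIntegral_one_sub_exp_neg_mul_mul_rpow {α : ℝ} (hα : 0 < α) (C : ℝ) {s : ℝ}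
    (hs : 0 ≤ s) :
    ∫⁻ z in Ioi 0, ENNReal.ofReal (1 - exp (-(s * z))) * ENNReal.ofReal (C * z ^ (-α - 1))
      = ENNReal.ofReal (s ^ α) *
        ∫⁻ z in Ioi 0, ENNReal.ofReal (1 - exp (-z)) * ENNReal.ofReal (C * z ^ (-α - 1)) := by
  rcases hs.eq_or_lt with rfl | hs
  · simp [zero_rpow hα.ne']
  · rw [setLIntegral_Ioi_comp_mul_left_mul_rpow (f := fun z => ENNReal.ofReal (1 - exp (-z)))
      (by fun_prop) hs]
    ring_nf

lemma one_sub_exp_neg_mem_Icc {s : ℝ} (hs : 0 ≤ s) : 1 - exp (-s) ∈ Icc (0 : ℝ) 1 :=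
  ⟨sub_nonneg.mpr (exp_le_one_iff.mpr (neg_nonpos.mpr hs)), sub_le_self _ (exp_pos _).le⟩

lemma ofReal_integral_one_sub_exp_neg {β : Type*} [MeasurableSpace β] {γ : Measure β}
    [IsFiniteMeasure γ] {f : β → ℝ} (hf : Measurable f) (hf0 : ∀ x, 0 ≤ f x) :
    ENNReal.ofReal (∫ x, (1 - exp (-f x)) ∂γ) = ∫⁻ x, ENNReal.ofReal (1 - exp (-f x)) ∂γ := by
  have hmem x := one_sub_exp_neg_mem_Icc (hf0 x)
  refine ofReal_integral_eq_lintegral_ofReal ?_ (.of_forall fun x => (hmem x).1)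
  refine (integrable_const 1).mono' (by fun_prop) (.of_forall fun x => ?_)
  rw [norm_of_nonneg (hmem x).1]
  exact (hmem x).2

lemma setLIntegral_integral_one_sub_exp_neg_mul_mul_rpow {β : Type*} [MeasurableSpace β]
    {γ : Measure β} [IsFiniteMeasure γ] {h : β → ℝ} (hh : Measurable h) (hh0 : ∀ x, 0 ≤ h x)
    {α : ℝ} (hα : 0 < α) (C : ℝ) {t : ℝ} (ht : 0 ≤ t) :
    ∫⁻ z in Ioi 0, ENNReal.ofReal (∫ x, (1 - exp (-(t * (z * h x)))) ∂γ) *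
        ENNReal.ofReal (C * z ^ (-α - 1))
      = ENNReal.ofReal (t ^ α) * (∫⁻ x, ENNReal.ofReal (h x ^ α) ∂γ) *
        ∫⁻ z in Ioi 0, ENNReal.ofReal (1 - exp (-z)) * ENNReal.ofReal (C * z ^ (-α - 1)) := by
  have hinner : ∀ z ∈ Ioi (0 : ℝ),
      ENNReal.ofReal (∫ x, (1 - exp (-(t * (z * h x)))) ∂γ) * ENNReal.ofReal (C * z ^ (-α - 1))
        = ∫⁻ x, ENNReal.ofReal (1 - exp (-(t * h x * z))) *
            ENNReal.ofReal (C * z ^ (-α - 1)) ∂γ := by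
    intro z hz
    have hz : 0 ≤ z := le_of_lt hz
    rw [ofReal_integral_one_sub_exp_neg (by fun_prop)
        fun x => mul_nonneg ht (mul_nonneg hz (hh0 x)),
      ← lintegral_mul_const' _ _ ENNReal.ofReal_ne_top]
    simp_rw [mul_comm z, mul_assoc]
  rw [setLIntegral_congr_fun measurableSet_Ioi hinner, lintegral_lintegral_swap (by fun_prop)]
  simp_rw [setLIntegral_one_sub_exp_neg_mul_mul_rpow hα C (mul_nonneg ht (hh0 _)),
    mul_rpow ht (hh0 _), ENNReal.ofReal_mul (rpow_nonneg ht _)]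
  rw [lintegral_mul_const _ (by fun_prop), lintegral_const_mul' _ _ ENNReal.ofReal_ne_top]

lemma setIntegral_integral_one_sub_exp_neg_mul_eq_toReal {β : Type*} [MeasurableSpace β]
    {γ : Measure β} [SFinite γ] {g : ℝ → β → ℝ} (hg : Measurable (Function.uncurry g))
    (hg0 : ∀ z x, 0 ≤ g z x) {ρ : ℝ → ℝ} (hρ : Measurable ρ) (hρ0 : ∀ z ∈ Ioi 0, 0 ≤ ρ z) :
    ∫ z in Ioi 0, (∫ x, (1 - exp (-(g z x))) ∂γ) * ρ z
      = (∫⁻ z in Ioi 0, ENNReal.ofReal (∫ x, (1 - exp (-(g z x))) ∂γ) *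
          ENNReal.ofReal (ρ z)).toReal := by
  set G := fun z => ∫ x, (1 - exp (-(g z x))) ∂γ
  have hG : StronglyMeasurable G :=
    StronglyMeasurable.integral_prod_right' (f := fun p => 1 - exp (-(g p.1 p.2)))
      (by fun_prop)
  have hG0 z : 0 ≤ G z := integral_nonneg fun x => (one_sub_exp_neg_mem_Icc (hg0 z x)).1
  rw [integral_eq_lintegral_of_nonneg_ae (f := fun z => G z * ρ z) ?_
    (hG.mul hρ.stronglyMeasurable).aestronglyMeasurable.restrict]
  · exact congrArg _ (setLIntegral_congr_fun measurableSet_Ioi fun z _ =>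
      ENNReal.ofReal_mul (hG0 z))
  · filter_upwards [ae_restrict_mem measurableSet_Ioi] with z hz
    exact mul_nonneg (hG0 z) (hρ0 z hz)

lemma lintegral_posPart_sq_rpow_gaussianReal {α : ℝ} (hα : 0 < α) :
    ∫⁻ x, ENNReal.ofReal ((max 0 x ^ 2) ^ α) ∂gaussianReal 0 1
      = ENNReal.ofReal (2 ^ α * Gamma (α + 1 / 2) / (2 * √π)) := by
  have hneg : ∀ x ∈ (Ioi (0 : ℝ))ᶜ,
      gaussianPDF 0 1 x * ENNReal.ofReal ((max 0 x ^ 2) ^ α) = 0 := by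
    intro x hx
    rw [mem_compl_iff, mem_Ioi, not_lt] at hx
    simp [max_eq_left hx, zero_rpow hα.ne']
  have hpos : ∀ x ∈ Ioi (0 : ℝ), gaussianPDF 0 1 x * ENNReal.ofReal ((max 0 x ^ 2) ^ α)
      = ENNReal.ofReal ((√(2 * π))⁻¹ * (x ^ (2 * α) * exp (-(1 / 2) * x ^ (2 : ℝ)))) := by
    intro x hx
    rw [gaussianPDF, gaussianPDFReal, ← ENNReal.ofReal_mul (by positivity),
      max_eq_right (le_of_lt hx), ← rpow_natCast x 2, ← rpow_mul (le_of_lt hx)]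
    congr 1
    push_cast
    rw [rpow_two]
    ring_nf
  rw [gaussianReal_of_var_ne_zero 0 one_ne_zero,
    lintegral_withDensity_eq_lintegral_mul _ (measurable_gaussianPDF 0 1) (by fun_prop)]
  simp only [Pi.mul_apply]
  rw [← lintegral_add_compl _ measurableSet_Ioi,
    setLIntegral_congr_fun measurableSet_Ioi.compl hneg, lintegral_zero, add_zero,
    setLIntegral_congr_fun measurableSet_Ioi hpos, ← ofReal_integral_eq_lintegral_ofReal]
  · rw [integral_const_mul,
      integral_rpow_mul_exp_neg_mul_rpow two_pos (by linarith) one_half_pos]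
    have hhalf : (1 / 2 : ℝ) ^ (-(2 * α + 1) / 2) = 2 ^ α * √2 := by
      rw [one_div, inv_rpow zero_le_two, ← rpow_neg zero_le_two, sqrt_eq_rpow,
        ← rpow_add two_pos]
      ring_nf
    rw [hhalf, sqrt_mul zero_le_two, show (2 * α + 1) / 2 = α + 1 / 2 by ring]
    have : 0 < √2 := by positivity
    field_simp
  · exact (integrableOn_rpow_mul_exp_neg_mul_rpow (by linarith) two_pos one_half_pos).const_mul _
  · filter_upwards [ae_restrict_mem measurableSet_Ioi] with x hx
    have : (0 : ℝ) < x := hx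
    positivity

lemma integral_exp_neg_mul_tsum_mul_of_laplaceFunctional {Ω β : Type*} [MeasurableSpace Ω]
    [MeasurableSpace β] {P : Measure Ω} {γ : Measure β} [IsFiniteMeasure γ] {α C : ℝ}
    (hα : 0 < α) (hC : 0 ≤ C) {ξ : ℕ → Ω → ℝ} {X : ℕ → Ω → β} (hξ : ∀ i ω, 0 ≤ ξ i ω)
    (hLaplace : ∀ g : ℝ → β → ℝ, Measurable (Function.uncurry g) → (∀ z x, 0 ≤ g z x) →
      ∫ ω, exp (-(∑' i, g (ξ i ω) (X i ω))) ∂P =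
        exp (-(∫ z in Ioi 0, (∫ x, (1 - exp (-(g z x))) ∂γ) * (C * z ^ (-α - 1)))))
    {h : β → ℝ} (hh : Measurable h) (hh0 : ∀ x, 0 ≤ h x) {t : ℝ} (ht : 0 ≤ t) :
    ∫ ω, exp (-(t * ∑' i, ξ i ω * h (X i ω))) ∂P
      = exp (-(ENNReal.ofReal (t ^ α) * (∫⁻ x, ENNReal.ofReal (h x ^ α) ∂γ) *
          ∫⁻ z in Ioi 0, ENNReal.ofReal (1 - exp (-z)) *
            ENNReal.ofReal (C * z ^ (-α - 1))).toReal) := by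
  have hg0 z x : 0 ≤ t * (max 0 z * h x) := mul_nonneg ht (mul_nonneg (le_max_left _ _) (hh0 x))
  have hρ0 : ∀ z ∈ Ioi (0 : ℝ), 0 ≤ C * z ^ (-α - 1) := fun z hz =>
    mul_nonneg hC (rpow_nonneg (le_of_lt hz) _)
  have hmax : ∀ z ∈ Ioi (0 : ℝ),
      ENNReal.ofReal (∫ x, (1 - exp (-(t * (max 0 z * h x)))) ∂γ) *
          ENNReal.ofReal (C * z ^ (-α - 1))
        = ENNReal.ofReal (∫ x, (1 - exp (-(t * (z * h x)))) ∂γ) *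
          ENNReal.ofReal (C * z ^ (-α - 1)) := fun z hz => by
    rw [max_eq_right (le_of_lt hz)]
  have hg := hLaplace (fun z x => t * (max 0 z * h x)) (by fun_prop) hg0
  rw [setIntegral_integral_one_sub_exp_neg_mul_eq_toReal (by fun_prop) hg0 (by fun_prop) hρ0,
    setLIntegral_congr_fun measurableSet_Ioi hmax,
    setLIntegral_integral_one_sub_exp_neg_mul_mul_rpow hh hh0 hα C ht] at hg
  rw [← hg]
  simp_rw [max_eq_right (hξ _ _), tsum_mul_left]

/-- Let `(ξ_i)` enumerate the points of a Poisson point process on `(0,∞)` with mean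
measure `ρ_stable(dz; α, c) = α c^α z^{-α-1} dz` and let `(X_i)` be iid standard normal
marks, independent of the process; this is encoded by the Laplace functional of the
marked point process. Then `∑ᵢ ξᵢ max(0,Xᵢ)²` has the same distribution as
`2 (Γ(1/2+α)/(2√π))^{1/α} ∑ᵢ ξᵢ`. -/
theorem stmt_19 {Ω : Type*} [MeasurableSpace Ω] (P : Measure Ω) [IsProbabilityMeasure P]
    (α c : ℝ) (hα : α ∈ Set.Ioo (0 : ℝ) 1) (hc : 0 < c)
    (ξ X : ℕ → Ω → ℝ)
    (hξm : ∀ i, Measurable (ξ i)) (hXm : ∀ i, Measurable (X i))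
    (hξpos : ∀ i ω, 0 < ξ i ω)
    (hLaplace : ∀ g : ℝ → ℝ → ℝ, Measurable (Function.uncurry g) →
      (∀ z x, 0 ≤ g z x) →
      ∫ ω, Real.exp (-(∑' i, g (ξ i ω) (X i ω))) ∂P =
        Real.exp (-(∫ z in Set.Ioi (0 : ℝ),
          (∫ x, (1 - Real.exp (-(g z x))) ∂(gaussianReal 0 1)) *
            (α * c ^ α * z ^ (-α - 1))))) :
    IdentDistrib (fun ω => ∑' i, ξ i ω * max 0 (X i ω) ^ 2)
      (fun ω => 2 * (Real.Gamma (1 / 2 + α) / (2 * Real.sqrt Real.pi)) ^ (1 / α) *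
        ∑' i, ξ i ω) P P := by
  obtain ⟨hα0, -⟩ := hα
  set κ := 2 * (Gamma (1 / 2 + α) / (2 * √π)) ^ (1 / α)
  have hB : 0 < Gamma (1 / 2 + α) / (2 * √π) := by
    have := Gamma_pos_of_pos (by linarith : 0 < 1 / 2 + α)
    positivity
  have hκ : 0 < κ := by positivity
  have hmoment : ∫⁻ x, ENNReal.ofReal ((max 0 x ^ 2) ^ α) ∂gaussianReal 0 1
      = ∫⁻ _, ENNReal.ofReal (κ ^ α) ∂gaussianReal 0 1 := by
    rw [lintegral_posPart_sq_rpow_gaussianReal hα0, lintegral_const, measure_univ, mul_one,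
      mul_rpow zero_le_two (rpow_nonneg hB.le _), ← rpow_mul hB.le, one_div_mul_cancel hα0.ne',
      rpow_one, add_comm, mul_div_assoc]
  have hξ0 i ω : 0 ≤ ξ i ω := (hξpos i ω).le
  have hsum ω : κ * ∑' i, ξ i ω = ∑' i, ξ i ω * κ := by rw [tsum_mul_right, mul_comm]
  refine identDistrib_of_integral_exp_neg_nat_mul_eq (by fun_prop) (by fun_prop)
    (fun ω => tsum_nonneg fun i => mul_nonneg (hξ0 i ω) (sq_nonneg _))
    (fun ω => mul_nonneg hκ.le (tsum_nonneg (hξ0 · ω))) fun n => ?_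
  simp_rw [hsum, integral_exp_neg_mul_tsum_mul_of_laplaceFunctional hα0 (by positivity) hξ0 hLaplace
      (h := fun x => max 0 x ^ 2) (by fun_prop) (fun x => by positivity) n.cast_nonneg,
    integral_exp_neg_mul_tsum_mul_of_laplaceFunctional hα0 (by positivity) hξ0 hLaplace
      (h := fun _ => κ) measurable_const (fun _ => hκ.le) n.cast_nonneg, hmoment]
end
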